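/- arXiv:0712.2390 — 4 statements merged into one kernel-verified Lean document; each statement's English description precedes it below -/
import Mathlib

section
/- Let λ be a k-empty partition with e-weight w and e-core κ, and r a large integer with d = (r+k) mod e. Define n_{r,k}(λ) = |{(a,b) : a, b ∈ 𝔅_r(λ), a < b, a ≡ d (mod e), b ≢ d (mod e)}|. Then 𝔏_k(λ) + n_{r,k}(λ) = 𝔏_k(κ) + n_{r,k}(κ) + w. -/
/-!
All quantities are sums over the beads `b` of the abacus; put `T = d + c e`. Then `𝔏_k` counts, for
each bead, the positions of its runner up to `b` that lie beyond `T`; since runner `d` is full,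
`n_{r,k}` gives each bead off runner `d` the `min c #{positions of runner d before b}` beads of
runner `d` before it; and `w = |𝔛(λ)| - |𝔛(κ)|` with `|𝔛| = ∑ (b / e + 1)`, because `𝔛(κ) ≤ 𝔛(λ)`:
sliding beads up never increases the number of beads of a runner at or beyond a given position.
The identity thus reduces to `∑_λ δ = ∑_κ δ` for a per-bead defect `δ`. On runner `d`, `λ` and `κ`
have the same beads. Off runner `d`, moving a bead one step down its runner adds a position `≤ T`
to its column exactly when it adds a bead of runner `d` before it, so `δ (b + e) = δ b`; as sliding
preserves the multiset of runners, the two sums agree.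
-/

open scoped BigOperators

def IsPartition (f : ℕ → ℕ) : Prop :=
  (∀ ⦃i j : ℕ⦄, i ≤ j → f j ≤ f i) ∧ ∃ N : ℕ, ∀ i, N ≤ i → f i = 0

noncomputable def conj (f : ℕ → ℕ) (i : ℕ) : ℕ := Nat.card {j : ℕ // i + 1 ≤ f j}

def betaSet (f : ℕ → ℕ) (r : ℕ) : Multiset ℕ :=
  (Multiset.range r).map fun i => f i + (r - 1 - i)

/-- e-extension of a multiset: z gets multiplicity |B ∩ {z, z+e, z+2e, …}|. -/
def eExt (e : ℕ) (B : Multiset ℕ) : Multiset ℕ :=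
  B.bind fun b => (Multiset.range (b / e + 1)).map fun j => b - j * e

def runnerCount (e d : ℕ) (B : Multiset ℕ) : ℕ :=
  Multiset.card (B.filter fun b => b % e = d)

/-- Beta-multiset of the e-core: slide all beads up their runners. -/
def coreBeta (e : ℕ) (B : Multiset ℕ) : Multiset ℕ :=
  (Multiset.range e).bind fun j =>
    (Multiset.range (runnerCount e j B)).map fun i => j + i * e

/-- Weight multiset 𝔚: records the start of each single-step slide; equivalently
determined by 𝔛 = 𝔛(core) ⊔ 𝔚. -/
def weightMS (e : ℕ) (B : Multiset ℕ) : Multiset ℕ :=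
  eExt e B - eExt e (coreBeta e B)

def eWeight (e : ℕ) (B : Multiset ℕ) : ℕ := Multiset.card (weightMS e B)

def DomMS (I J : Multiset ℕ) : Prop := Multiset.Rel (fun a b => b ≤ a) I J

/-- refined dominance order: same e-core and 𝔛^e_r(g) ⪰ 𝔛^e_r(f). -/
def Dominates (e r : ℕ) (g f : ℕ → ℕ) : Prop :=
  coreBeta e (betaSet g r) = coreBeta e (betaSet f r) ∧
    DomMS (eExt e (betaSet g r)) (eExt e (betaSet f r))
/-- k-empty: all beads on runner d = (r+k) mod e are as high as possible. -/
def KEmpty (e k r : ℕ) (f : ℕ → ℕ) : Prop :=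
  ∀ b ∈ betaSet f r, b % e = (r + k) % e →
    b < (r + k) % e + runnerCount e ((r + k) % e) (betaSet f r) * e

/-- 𝔏_k(λ): number of elements (with multiplicity) of 𝔛^e_r(λ) greater than d + c·e. -/
def Lk (e k r : ℕ) (f : ℕ → ℕ) : ℕ :=
  Multiset.card <| (eExt e (betaSet f r)).filter fun x =>
    (r + k) % e + runnerCount e ((r + k) % e) (betaSet f r) * e < x
/-- n_{r,k}(λ): number of pairs a < b in the beta-set with a ≡ d, b ≢ d (mod e). -/
def nrk (e d : ℕ) (B : Multiset ℕ) : ℕ :=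
  ((B.filter fun a => a % e = d).map fun a =>
    Multiset.card (B.filter fun b => a < b ∧ ¬ b % e = d)).sum

def partOfBeta (C : Multiset ℕ) : ℕ → ℕ := fun i =>
  ((C.sort (· ≤ ·)).reverse.getD i 0) - (Multiset.card C - 1 - i)

open Multiset

namespace Abacus

lemma card_filter_eq_sum_map_ite (p : ℕ → Prop) [DecidablePred p] (s : Multiset ℕ) :
    card (s.filter p) = (s.map fun b => if p b then 1 else 0).sum := by
  induction s using Multiset.induction with
  | empty => simp
  | cons a s ih => by_cases h : p a <;> simp [h, ih, add_comm]

lemma range_filter_lt (n m : ℕ) : (range n).filter (· < m) = range (min n m) :=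
  (Nodup.ext ((nodup_range n).filter _) (nodup_range _)).mpr fun i => by simp

lemma card_filter_add_card_filter_not (p : ℕ → Prop) [DecidablePred p] (s : Multiset ℕ) :
    card (s.filter p) + card (s.filter fun a => ¬ p a) = card s := by
  rw [← card_add, filter_add_not]

variable {e : ℕ}

def column (e b : ℕ) : Multiset ℕ := (range (b / e + 1)).map fun j => b - j * e

lemma eExt_eq_bind (B : Multiset ℕ) : eExt e B = B.bind (column e) := rfl

lemma card_column (b : ℕ) : card (column e b) = b / e + 1 := by simp [column]

lemma mem_column (he : 0 < e) {b x : ℕ} : x ∈ column e b ↔ x ≤ b ∧ x % e = b % e := by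
  constructor
  · rintro hx
    obtain ⟨j, hj, rfl⟩ := mem_map.mp hx
    have hje : j * e ≤ b := (Nat.le_div_iff_mul_le he).mp (Nat.lt_succ_iff.mp (mem_range.mp hj))
    refine ⟨Nat.sub_le _ _, ?_⟩
    rw [Nat.mul_comm] at hje ⊢
    exact Nat.sub_mul_mod hje
  · rintro ⟨hxb, hmod⟩
    have hdvd : e ∣ b - x := (Nat.modEq_iff_dvd' hxb).mp hmod
    refine mem_map.mpr ⟨(b - x) / e, ?_, ?_⟩
    · exact mem_range.mpr (Nat.lt_succ_iff.mpr (Nat.div_le_div_right (Nat.sub_le _ _)))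
    · rw [Nat.div_mul_cancel hdvd]
      omega

lemma nodup_column (he : 0 < e) (b : ℕ) : (column e b).Nodup := by
  refine (nodup_range _).map_on fun i hi j hj hij => Nat.eq_of_mul_eq_mul_right he ?_
  have hi' := (Nat.le_div_iff_mul_le he).mp (Nat.lt_succ_iff.mp (mem_range.mp hi))
  have hj' := (Nat.le_div_iff_mul_le he).mp (Nat.lt_succ_iff.mp (mem_range.mp hj))
  omega

lemma column_add (he : 0 < e) (b : ℕ) : column e (b + e) = (b + e) ::ₘ column e b := by
  have hb : b + e ∉ column e b := fun h => by have := ((mem_column he).mp h).1; omega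
  refine (Nodup.ext (nodup_column he _) ((nodup_column he b).cons hb)).mpr fun x => ?_
  simp only [mem_cons, mem_column he, Nat.add_mod_right]
  constructor
  · rintro ⟨hx, hmod⟩
    by_cases hxe : x = b + e
    · exact Or.inl hxe
    · obtain ⟨q, hq⟩ : e ∣ b + e - x :=
        (Nat.modEq_iff_dvd' hx).mp (by rw [Nat.ModEq, Nat.add_mod_right, hmod])
      rcases q with _ | q
      · omega
      · exact Or.inr ⟨by rw [Nat.mul_succ] at hq; omega, hmod⟩
  · rintro (rfl | ⟨hx, hmod⟩)
    · exact ⟨le_rfl, Nat.add_mod_right _ _⟩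
    · exact ⟨by omega, hmod⟩

lemma count_eExt (he : 0 < e) (B : Multiset ℕ) (x : ℕ) :
    count x (eExt e B) = card (B.filter fun b => x ≤ b ∧ x % e = b % e) := by
  rw [eExt_eq_bind, count_bind, card_filter_eq_sum_map_ite]
  refine congrArg _ (map_congr rfl fun b _ => ?_)
  split_ifs with h
  · exact count_eq_one_of_mem (nodup_column he b) ((mem_column he).mpr h)
  · exact count_eq_zero_of_notMem fun hm => h ((mem_column he).mp hm)

def positionsBelow (e j x : ℕ) : ℕ := (x + e - 1 - j) / e

lemma lt_positionsBelow_iff (he : 0 < e) {j : ℕ} (hj : j < e) {i x : ℕ} :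
    i < positionsBelow e j x ↔ j + i * e < x := by
  rw [positionsBelow, Nat.lt_iff_add_one_le, Nat.le_div_iff_mul_le he, add_mul]
  omega

lemma positionsBelow_add (he : 0 < e) {j : ℕ} (hj : j < e) (x : ℕ) :
    positionsBelow e j (x + e) = positionsBelow e j x + 1 := by
  rw [positionsBelow, positionsBelow, ← Nat.add_div_right _ he]
  congr 1
  omega

def runnerTop (e j n : ℕ) : Multiset ℕ := (range n).map fun i => j + i * e

lemma card_runnerTop (j n : ℕ) : card (runnerTop e j n) = n := by simp [runnerTop]

lemma nodup_runnerTop (he : 0 < e) (j n : ℕ) : (runnerTop e j n).Nodup :=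
  (nodup_range n).map fun _ _ h => Nat.eq_of_mul_eq_mul_right he (by omega)

lemma card_filter_runnerTop_lt (he : 0 < e) {j : ℕ} (hj : j < e) (n x : ℕ) :
    card ((runnerTop e j n).filter (· < x)) = min n (positionsBelow e j x) := by
  have hpos : (range n).filter ((· < x) ∘ fun i => j + i * e)
      = (range n).filter (· < positionsBelow e j x) :=
    filter_congr fun _ _ => (lt_positionsBelow_iff he hj).symm
  rw [runnerTop, filter_map, card_map, hpos, range_filter_lt, card_range]

lemma card_filter_lt_le_positionsBelow (he : 0 < e) {j : ℕ} (hj : j < e) {R : Multiset ℕ}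
    (hR : R.Nodup) (hRj : ∀ b ∈ R, b % e = j) (x : ℕ) :
    card (R.filter (· < x)) ≤ positionsBelow e j x := by
  have hdiv : ∀ b ∈ R, j + b / e * e = b := fun b hb => by
    rw [← hRj b hb, Nat.mod_add_div']
  have hinj : ((R.filter (· < x)).map (· / e)).Nodup :=
    (hR.filter _).map_on fun a ha b hb hab => by
      rw [← hdiv a (mem_filter.mp ha).1, ← hdiv b (mem_filter.mp hb).1]
      exact congrArg (j + · * e) hab
  have hsub : (R.filter (· < x)).map (· / e) ⊆ range (positionsBelow e j x) := by
    intro i hi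
    obtain ⟨b, hb, rfl⟩ := mem_map.mp hi
    rw [mem_range, lt_positionsBelow_iff he hj, hdiv b (mem_filter.mp hb).1]
    exact (mem_filter.mp hb).2
  calc card (R.filter (· < x)) = card ((R.filter (· < x)).map (· / e)) := (card_map _ _).symm
    _ ≤ card (range (positionsBelow e j x)) := card_le_card ((le_iff_subset hinj).mpr hsub)
    _ = positionsBelow e j x := card_range _

lemma coreBeta_eq_bind_runnerTop (B : Multiset ℕ) :
    coreBeta e B = (range e).bind fun j => runnerTop e j (runnerCount e j B) := rfl

lemma filter_coreBeta (B : Multiset ℕ) {j : ℕ} (hj : j < e) :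
    (coreBeta e B).filter (fun b => b % e = j) = runnerTop e j (runnerCount e j B) := by
  have hres : ∀ j' < e, (runnerTop e j' (runnerCount e j' B)).filter (fun b => b % e = j)
      = if j' = j then runnerTop e j (runnerCount e j B) else 0 := by
    intro j' hj'
    split_ifs with h
    · subst h
      exact filter_eq_self.mpr fun b hb => by
        obtain ⟨i, _, rfl⟩ := mem_map.mp hb
        rw [Nat.add_mul_mod_self_right, Nat.mod_eq_of_lt hj']
    · exact filter_eq_nil.mpr fun b hb => by
        obtain ⟨i, _, rfl⟩ := mem_map.mp hb
        rw [Nat.add_mul_mod_self_right, Nat.mod_eq_of_lt hj']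
        exact h
  rw [coreBeta_eq_bind_runnerTop, filter_bind,
    bind_congr fun j' hj' => hres j' (mem_range.mp hj'), Multiset.bind, join,
    ← Finset.range_val, ← Finset.sum_eq_multiset_sum]
  simp [hj]

lemma runnerCount_coreBeta (B : Multiset ℕ) {j : ℕ} (hj : j < e) :
    runnerCount e j (coreBeta e B) = runnerCount e j B := by
  rw [runnerCount, filter_coreBeta B hj, card_runnerTop]

lemma map_mod_coreBeta (he : 0 < e) (B : Multiset ℕ) :
    (coreBeta e B).map (· % e) = B.map (· % e) := by
  ext j
  simp only [count_map]
  by_cases hj : j < e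
  · have hsymm : ∀ M : Multiset ℕ,
        M.filter (fun a => j = a % e) = M.filter (fun a => a % e = j) :=
      fun M => filter_congr fun _ _ => eq_comm
    rw [hsymm, hsymm, filter_coreBeta B hj, card_runnerTop, runnerCount]
  · rw [filter_eq_nil.mpr, filter_eq_nil.mpr] <;>
      exact fun a _ h => hj (h ▸ Nat.mod_lt a he)

lemma card_coreBeta (he : 0 < e) (B : Multiset ℕ) : card (coreBeta e B) = card B := by
  rw [← card_map (· % e), map_mod_coreBeta he, card_map]

lemma nodup_coreBeta (he : 0 < e) (B : Multiset ℕ) : (coreBeta e B).Nodup := by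
  refine nodup_iff_count_le_one.mpr fun x => ?_
  rw [← count_filter_of_pos (p := fun b => b % e = x % e) rfl,
    filter_coreBeta B (Nat.mod_lt x he)]
  exact nodup_iff_count_le_one.mp (nodup_runnerTop he _ _) x

lemma eExt_coreBeta_le (he : 0 < e) {B : Multiset ℕ} (hB : B.Nodup) :
    eExt e (coreBeta e B) ≤ eExt e B := by
  refine le_iff_count.mpr fun x => ?_
  have hj := Nat.mod_lt x he
  have hcount : ∀ M : Multiset ℕ,
      count x (eExt e M) = card ((M.filter fun b => b % e = x % e).filter fun b => ¬ b < x) := by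
    intro M
    rw [count_eExt he, filter_filter]
    exact congrArg card (filter_congr fun b _ => by omega)
  rw [hcount, hcount, filter_coreBeta B hj]
  set R := B.filter fun b => b % e = x % e
  have hn : runnerCount e (x % e) B = card R := rfl
  rw [hn]
  have hR : card (R.filter (· < x)) + card (R.filter fun b => ¬ b < x) = card R :=
    card_filter_add_card_filter_not _ R
  have hC : card ((runnerTop e (x % e) (card R)).filter (· < x))
      + card ((runnerTop e (x % e) (card R)).filter fun b => ¬ b < x) = card R := by
    rw [card_filter_add_card_filter_not, card_runnerTop]
  have hRlt : card (R.filter (· < x)) ≤ positionsBelow e (x % e) x :=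
    card_filter_lt_le_positionsBelow he hj (hB.filter _) (fun b hb => (mem_filter.mp hb).2) x
  rw [card_filter_runnerTop_lt he hj] at hC
  omega

lemma filter_eq_runnerTop_of_lt {d : ℕ} {B : Multiset ℕ} (hB : B.Nodup)
    (hke : ∀ b ∈ B, b % e = d → b < d + runnerCount e d B * e) :
    B.filter (fun b => b % e = d) = runnerTop e d (runnerCount e d B) := by
  refine eq_of_le_of_card_le ((le_iff_subset (hB.filter _)).mpr fun b hb => ?_)
    (by rw [card_runnerTop, runnerCount])
  obtain ⟨hbB, hbd⟩ := mem_filter.mp hb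
  have hb : d + b / e * e = b := by rw [← hbd, Nat.mod_add_div']
  refine mem_map.mpr ⟨b / e, mem_range.mpr (Nat.lt_of_mul_lt_mul_right (a := e) ?_), hb⟩
  have := hke b hbB hbd
  omega

def colAbove (e T b : ℕ) : ℕ := card ((column e b).filter (T < ·))

def colBelow (e T b : ℕ) : ℕ := card ((column e b).filter fun x => ¬ T < x)

lemma colAbove_add_colBelow (e T b : ℕ) : colAbove e T b + colBelow e T b = b / e + 1 := by
  rw [colAbove, colBelow, card_filter_add_card_filter_not, card_column]

lemma colBelow_add (he : 0 < e) (T b : ℕ) :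
    colBelow e T (b + e) = colBelow e T b + if T < b + e then 0 else 1 := by
  rw [colBelow, colBelow, column_add he, filter_cons]
  split_ifs <;> simp [add_comm]

lemma card_filter_eExt (T : ℕ) (B : Multiset ℕ) :
    card ((eExt e B).filter (T < ·)) = (B.map (colAbove e T)).sum := by
  rw [eExt_eq_bind, filter_bind, card_bind]
  rfl

lemma card_eExt (T : ℕ) (B : Multiset ℕ) :
    card (eExt e B) = (B.map fun b => colAbove e T b + colBelow e T b).sum := by
  rw [eExt_eq_bind, card_bind]
  exact congrArg sum (map_congr rfl fun b _ => by
    rw [Function.comp_apply, card_column, colAbove_add_colBelow])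

lemma nrk_eq_sum (he : 0 < e) {d c : ℕ} (hd : d < e) {B : Multiset ℕ}
    (hrun : B.filter (fun b => b % e = d) = runnerTop e d c) :
    nrk e d B = (B.map fun b => if b % e = d then 0 else min c (positionsBelow e d b)).sum := by
  have hcount : ∀ b, (if b % e = d then 0 else min c (positionsBelow e d b))
      = ((runnerTop e d c).map fun a => if a < b ∧ ¬ b % e = d then 1 else 0).sum := by
    intro b
    split_ifs with h
    · simp [h]
    · simp only [h, not_false_eq_true, and_true]
      rw [← card_filter_eq_sum_map_ite, card_filter_runnerTop_lt he hd]
  rw [nrk, hrun, map_congr rfl fun b _ => hcount b, sum_map_sum_map]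
  exact congrArg sum (map_congr rfl fun a _ => card_filter_eq_sum_map_ite _ B)

def beadDefect (e d c b : ℕ) : ℤ :=
  ((if b % e = d then 0 else min c (positionsBelow e d b) : ℕ) : ℤ) - colBelow e (d + c * e) b

lemma card_filter_eExt_add_nrk_eq (he : 0 < e) {d c : ℕ} (hd : d < e) {B : Multiset ℕ}
    (hrun : B.filter (fun b => b % e = d) = runnerTop e d c) :
    (card ((eExt e B).filter (d + c * e < ·)) + nrk e d B : ℤ)
      = card (eExt e B) + (B.map (beadDefect e d c)).sum := by
  rw [card_filter_eExt, nrk_eq_sum he hd hrun, card_eExt (d + c * e)]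
  push_cast [Nat.cast_multiset_sum, map_map]
  rw [← sum_map_add, ← sum_map_add]
  exact congrArg sum (map_congr rfl fun b _ => by
    simp only [Function.comp_apply, beadDefect]
    push_cast
    ring)

lemma beadDefect_add (he : 0 < e) {d : ℕ} (hd : d < e) (c : ℕ) {b : ℕ} (hb : b % e ≠ d) :
    beadDefect e d c (b + e) = beadDefect e d c b := by
  have hc := lt_positionsBelow_iff he hd (i := c) (x := b + e)
  rw [positionsBelow_add he hd] at hc
  simp only [beadDefect, Nat.add_mod_right, if_neg hb, positionsBelow_add he hd,
    colBelow_add he]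
  split_ifs with h <;> push_cast
  all_goals omega

lemma apply_eq_apply_mod {α : Type*} {d : ℕ} {χ : ℕ → α}
    (hχ : ∀ b, b % e ≠ d → χ (b + e) = χ b) {b : ℕ} (hb : b % e ≠ d) : χ b = χ (b % e) := by
  have hstep : ∀ q, χ (b % e + q * e) = χ (b % e) := by
    intro q
    induction q with
    | zero => simp
    | succ q ih =>
      rw [add_mul, one_mul, ← add_assoc,
        hχ _ (by rwa [Nat.add_mul_mod_self_right, Nat.mod_mod]), ih]
  rw [← hstep (b / e), Nat.mod_add_div']

lemma sum_map_coreBeta_eq (he : 0 < e) {d : ℕ} (χ : ℕ → ℤ)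
    (hχ : ∀ b, b % e ≠ d → χ (b + e) = χ b) {B : Multiset ℕ}
    (hrun : B.filter (fun b => b % e = d) = (coreBeta e B).filter (fun b => b % e = d)) :
    (B.map χ).sum = ((coreBeta e B).map χ).sum := by
  have hsplit : ∀ M : Multiset ℕ, (M.map χ).sum
      = ((M.filter fun b => b % e = d).map χ).sum
        + (((M.map (· % e)).filter (· ≠ d)).map χ).sum := by
    intro M
    conv_lhs => rw [← filter_add_not (fun b => b % e = d) M]
    rw [map_add, sum_add, filter_map, map_map]
    congr 2
    exact map_congr (filter_congr fun _ _ => Iff.rfl)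
      fun b hb => apply_eq_apply_mod hχ (mem_filter.mp hb).2
  rw [hsplit B, hsplit (coreBeta e B), hrun, map_mod_coreBeta he]

theorem card_filter_eExt_add_nrk {d : ℕ} (hd : d < e) {B : Multiset ℕ} (hB : B.Nodup)
    (hke : ∀ b ∈ B, b % e = d → b < d + runnerCount e d B * e) :
    card ((eExt e B).filter fun x => d + runnerCount e d B * e < x) + nrk e d B
      = card ((eExt e (coreBeta e B)).filter fun x => d + runnerCount e d B * e < x)
        + nrk e d (coreBeta e B) + eWeight e B := by
  have he : 0 < e := by omega
  set c := runnerCount e d B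
  have hrunB : B.filter (fun b => b % e = d) = runnerTop e d c := filter_eq_runnerTop_of_lt hB hke
  have hrunC : (coreBeta e B).filter (fun b => b % e = d) = runnerTop e d c := filter_coreBeta B hd
  have hle := eExt_coreBeta_le he hB
  have hw : eWeight e B + card (eExt e (coreBeta e B)) = card (eExt e B) := by
    rw [eWeight, weightMS, card_sub hle, Nat.sub_add_cancel (card_le_card hle)]
  have hdecB := card_filter_eExt_add_nrk_eq he hd hrunB
  have hdecC := card_filter_eExt_add_nrk_eq he hd hrunC
  have hdefect := sum_map_coreBeta_eq he (beadDefect e d c) (fun _ => beadDefect_add he hd c)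
    (hrunB.trans hrunC.symm)
  omega

lemma card_betaSet (f : ℕ → ℕ) (r : ℕ) : card (betaSet f r) = r := by
  simp [betaSet]

lemma nodup_betaSet {f : ℕ → ℕ} (hf : Antitone f) (r : ℕ) :
    (betaSet f r).Nodup := by
  refine (nodup_range r).map_on fun i hi j hj hij => ?_
  have hi' := mem_range.mp hi
  have hj' := mem_range.mp hj
  rcases le_total i j with h | h
  · have := hf h; omega
  · have := hf h; omega

lemma sub_le_getElem_of_pairwise_gt {l : List ℕ} (hl : l.Pairwise (· > ·)) :
    ∀ i (hi : i < l.length), l.length - 1 - i ≤ l[i] := by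
  induction l with
  | nil => simp
  | cons a t ih =>
    obtain ⟨ha, ht⟩ := List.pairwise_cons.mp hl
    rintro (_ | i) hi
    · rcases t with _ | ⟨b, t⟩
      · simp
      · have := ih ht 0 (by simp)
        have := ha b (by simp)
        simp only [List.length_cons, List.getElem_cons_zero] at *
        omega
    · have := ih ht i (by simpa using hi)
      simp only [List.length_cons, List.getElem_cons_succ]
      omega

lemma betaSet_partOfBeta {C : Multiset ℕ} (hC : C.Nodup) :
    betaSet (partOfBeta C) (card C) = C := by
  set l := (C.sort (· ≤ ·)).reverse with hl
  have hlen : l.length = card C := by simp [hl]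
  have hlC : (l : Multiset ℕ) = C := by rw [hl, coe_reverse, sort_eq]
  have hgt : l.Pairwise (· > ·) := by
    have hnodup : (C.sort (· ≤ ·)).Nodup := coe_nodup.mp (by rwa [sort_eq])
    exact (List.sortedGT_reverse.mpr
      ((List.Pairwise.sortedLE (pairwise_sort C _)).sortedLT_of_nodup hnodup)).pairwise
  have hentry : ∀ i ∈ range (card C), partOfBeta C i + (card C - 1 - i) = l.getD i 0 := by
    intro i hi
    have hi' : i < l.length := hlen ▸ mem_range.mp hi
    have := sub_le_getElem_of_pairwise_gt hgt i hi'
    rw [partOfBeta, ← hl, List.getD_eq_getElem _ _ hi']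
    omega
  rw [betaSet, map_congr rfl hentry, ← hlen]
  conv_rhs => rw [← hlC]
  rw [range, map_coe, coe_eq_coe]
  refine List.Perm.of_eq (List.ext_getElem (by simp) fun i _ hi => ?_)
  simp [List.getElem?_eq_getElem hi]

end Abacus

theorem stmt13_general (e k r : ℕ) (he : 2 ≤ e) (f : ℕ → ℕ)
    (hf : IsPartition f) (hke : KEmpty e k r f) :
    Lk e k r f + nrk e ((r + k) % e) (betaSet f r)
      = Lk e k r (partOfBeta (coreBeta e (betaSet f r)))
        + nrk e ((r + k) % e) (coreBeta e (betaSet f r))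
        + eWeight e (betaSet f r) := by
  have he0 : 0 < e := by omega
  have hd : (r + k) % e < e := Nat.mod_lt _ he0
  have hcore : betaSet (partOfBeta (coreBeta e (betaSet f r))) r = coreBeta e (betaSet f r) := by
    simpa only [Abacus.card_coreBeta he0, Abacus.card_betaSet] using
      Abacus.betaSet_partOfBeta (Abacus.nodup_coreBeta he0 (betaSet f r))
  rw [Lk, Lk, hcore, Abacus.runnerCount_coreBeta _ hd]
  exact Abacus.card_filter_eExt_add_nrk hd (Abacus.nodup_betaSet hf.1 r) hke

/-- 𝔏_k(λ) + n_{r,k}(λ) = 𝔏_k(κ) + n_{r,k}(κ) + w. -/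
theorem stmt13 (e k r : ℕ) (he : 2 ≤ e) (hk : k < e) (f : ℕ → ℕ)
    (hf : IsPartition f) (hr : conj f 0 ≤ r) (hke : KEmpty e k r f) :
    Lk e k r f + nrk e ((r + k) % e) (betaSet f r)
      = Lk e k r (partOfBeta (coreBeta e (betaSet f r)))
        + nrk e ((r + k) % e) (coreBeta e (betaSet f r))
        + eWeight e (betaSet f r) :=
  stmt13_general e k r he f hf hke
end

section
/- Suppose λ and μ are k-empty partitions with the same e-core and the same e-weight, and r is a large integer. Then 𝔏_k(λ) = 𝔏_k(μ) if and only if n_{r,k}(λ) = n_{r,k}(μ). -/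
open scoped BigOperators

namespace S14

open Multiset

lemma my_filter_bind {α β : Type} (s : Multiset α) (f : α → Multiset β) (p : β → Prop)
    [DecidablePred p] : (s.bind f).filter p = s.bind fun a => (f a).filter p := by
  induction s using Multiset.induction with
  | empty => simp
  | cons a s ih => simp [Multiset.cons_bind, Multiset.filter_add, ih]

lemma sum_ite_one (B : Multiset ℕ) (q : ℕ → Prop) [DecidablePred q] :
    (B.map fun b => if q b then 1 else 0).sum = card (B.filter q) := by
  induction B using Multiset.induction with
  | empty => simp
  | cons b B ih =>
      rw [Multiset.map_cons, Multiset.sum_cons, Multiset.filter_cons, card_add, ih]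
      split <;> simp [add_comm]

lemma sum_card_filter_swap (A B : Multiset ℕ) (p : ℕ → ℕ → Prop)
    [∀ a b, Decidable (p a b)] :
    (A.map fun a => card (B.filter fun b => p a b)).sum
      = (B.map fun b => card (A.filter fun a => p a b)).sum := by
  induction A using Multiset.induction with
  | empty => simp
  | cons a A ih =>
      rw [Multiset.map_cons, Multiset.sum_cons, ih]
      have h : (B.map fun b => card ((a ::ₘ A).filter fun x => p x b))
          = B.map fun b => ((if p a b then 1 else 0) + card (A.filter fun x => p x b)) := by
        apply Multiset.map_congr rfl
        intro b _
        rw [Multiset.filter_cons, card_add]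
        split <;> simp
      rw [h, Multiset.sum_map_add, sum_ite_one]

lemma card_filter_range_lt (n m : ℕ) :
    card ((range n).filter fun j => j < m) = min n m := by
  induction n with
  | zero => simp
  | succ n ih =>
      rw [Multiset.range_succ, Multiset.filter_cons, card_add, ih]
      split <;> simp <;> omega

lemma card_filter_range_le (n m : ℕ) :
    card ((range n).filter fun j => m ≤ j) = n - m := by
  induction n with
  | zero => simp
  | succ n ih =>
      rw [Multiset.range_succ, Multiset.filter_cons, card_add, ih]
      split <;> simp <;> omega

lemma card_filter_range_eq (n m : ℕ) :
    card ((range n).filter fun j => j = m) = if m < n then 1 else 0 := by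
  induction n with
  | zero => simp
  | succ n ih =>
      rw [Multiset.range_succ, Multiset.filter_cons, card_add, ih]
      split_ifs <;> simp_all <;> omega

lemma key_iff (e d s c u : ℕ) (hd : d < e) (hs : s < e) (hne : s ≠ d) :
    d + c * e < s + u * e ↔ c < u + (if d < s then 1 else 0) := by
  rcases Nat.lt_or_ge d s with h | h
  · rw [if_pos h]
    constructor
    · intro hlt
      by_contra hc
      push_neg at hc
      have h1 : (u + 1) * e ≤ c * e := Nat.mul_le_mul_right e (by omega)
      have h2 : (u + 1) * e = u * e + e := by ring
      linarith
    · intro hc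
      have h1 : c * e ≤ u * e := Nat.mul_le_mul_right e (by omega)
      linarith
  · have h' : s < d := by omega
    rw [if_neg (by omega)]
    constructor
    · intro hlt
      by_contra hc
      push_neg at hc
      have h1 : u * e ≤ c * e := Nat.mul_le_mul_right e hc
      linarith
    · intro hc
      have h1 : (c + 1) * e ≤ u * e := Nat.mul_le_mul_right e hc
      have h2 : (c + 1) * e = c * e + e := by ring
      linarith

lemma betaSet_nodup (f : ℕ → ℕ) (hf : ∀ ⦃i j : ℕ⦄, i ≤ j → f j ≤ f i) (r : ℕ) :
    (betaSet f r).Nodup := by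
  unfold betaSet
  refine Multiset.Nodup.map_on ?_ (Multiset.nodup_range r)
  intro i hi j hj hij
  rw [Multiset.mem_range] at hi hj
  by_contra hne
  rcases Nat.lt_or_ge i j with h | h
  · have := hf h.le; omega
  · have h' : j < i := by omega
    have := hf h'.le; omega

lemma card_betaSet (f : ℕ → ℕ) (r : ℕ) : card (betaSet f r) = r := by
  simp [betaSet]

lemma runner_eq (e d : ℕ) (B : Multiset ℕ) (he : 0 < e) (hB : B.Nodup)
    (hK : ∀ b ∈ B, b % e = d → b < d + runnerCount e d B * e) :
    B.filter (fun b => b % e = d)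
      = (range (runnerCount e d B)).map fun i => d + i * e := by
  apply Multiset.eq_of_le_of_card_le
  · rw [Multiset.le_iff_subset (Multiset.Nodup.filter _ hB)]
    intro x hx
    rw [Multiset.mem_filter] at hx
    obtain ⟨hxB, hxd⟩ := hx
    rw [Multiset.mem_map]
    refine ⟨x / e, ?_, ?_⟩
    · rw [Multiset.mem_range]
      have h1 := hK x hxB hxd
      have h2 : d + x / e * e = x := by
        conv_rhs => rw [← Nat.mod_add_div x e, hxd]
        rw [Nat.mul_comm]
      by_contra hge
      push_neg at hge
      have : runnerCount e d B * e ≤ x / e * e := Nat.mul_le_mul_right e hge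
      omega
    · conv_rhs => rw [← Nat.mod_add_div x e, hxd]
      rw [Nat.mul_comm]
  · rw [Multiset.card_map, Multiset.card_range]
    exact le_of_eq rfl

lemma sub_mul_eq (b j e : ℕ) (hj : j ≤ b / e) :
    b - j * e = b % e + (b / e - j) * e := by
  have h1 : j * e ≤ b / e * e := Nat.mul_le_mul_right e hj
  have h2 := Nat.mod_add_div' b e
  calc b - j * e = b % e + b / e * e - j * e := by rw [h2]
    _ = b % e + (b / e * e - j * e) := Nat.add_sub_assoc h1 _
    _ = b % e + (b / e - j) * e := by rw [Nat.sub_mul]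

lemma count_eExt (e : ℕ) (he : 0 < e) (B : Multiset ℕ) (x : ℕ) :
    count x (eExt e B) = card (B.filter fun b => b % e = x % e ∧ x ≤ b) := by
  rw [eExt, Multiset.count_bind]
  rw [show (B.map fun b => count x ((range (b / e + 1)).map fun j => b - j * e))
      = B.map fun b => if b % e = x % e ∧ x ≤ b then 1 else 0 from ?_, sum_ite_one]
  apply Multiset.map_congr rfl
  intro b _
  rw [Multiset.count_map]
  have key : ∀ j, j ∈ range (b / e + 1) → (x = b - j * e ↔
      (b % e = x % e ∧ x ≤ b) ∧ j = b / e - x / e) := by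
    intro j hj
    rw [Multiset.mem_range] at hj
    have hj' : j ≤ b / e := by omega
    have hs := sub_mul_eq b j e hj'
    have hxe := Nat.mod_add_div' x e
    have hbe := Nat.mod_add_div' b e
    constructor
    · intro hx
      have hmod : x % e = b % e := by
        rw [hx, hs, Nat.add_mul_mod_self_right]
        exact Nat.mod_eq_of_lt (Nat.mod_lt _ he)
      have hle : x ≤ b := hx ▸ Nat.sub_le b (j * e)
      refine ⟨⟨hmod.symm, hle⟩, ?_⟩
      have h4 : x = b % e + x / e * e := by rw [← hmod, Nat.mod_add_div']
      have h6 : b % e + (b / e - j) * e = b % e + x / e * e := by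
        rw [← hs, ← hx]; exact h4
      have h5 : b / e - j = x / e := Nat.eq_of_mul_eq_mul_right he (Nat.add_left_cancel h6)
      omega
    · rintro ⟨⟨hm, hle⟩, rfl⟩
      have hdiv : x / e ≤ b / e := by
        by_contra hlt
        push_neg at hlt
        have h3 : b / e * e < x / e * e := (Nat.mul_lt_mul_right he).mpr hlt
        omega
      rw [sub_mul_eq b _ e (by omega)]
      have h7 : b / e - (b / e - x / e) = x / e := by omega
      rw [h7, hm, Nat.mod_add_div']
  rw [Multiset.filter_congr (q := fun j => (b % e = x % e ∧ x ≤ b) ∧ j = b / e - x / e)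
      (fun j hj => key j hj)]
  by_cases hc : b % e = x % e ∧ x ≤ b
  · have hdiv : x / e ≤ b / e := by
      by_contra hlt
      push_neg at hlt
      have h3 : b / e * e < x / e * e := (Nat.mul_lt_mul_right he).mpr hlt
      have hxe := Nat.mod_add_div' x e
      have hbe := Nat.mod_add_div' b e
      omega
    rw [Multiset.filter_congr (q := fun j => j = b / e - x / e)
        (fun j _ => by simp [hc]), card_filter_range_eq,
        if_pos (Nat.lt_succ_of_le (Nat.sub_le _ _)), if_pos hc]
  · rw [if_neg hc, Multiset.card_eq_zero, Multiset.filter_eq_nil]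
    rintro j hj ⟨h1, _⟩
    exact hc h1

lemma card_eExt (e : ℕ) (B : Multiset ℕ) :
    card (eExt e B) = (B.map fun b => b / e).sum + card B := by
  rw [eExt, Multiset.card_bind]
  have h : (B.map (card ∘ fun b => (range (b / e + 1)).map fun j => b - j * e))
      = B.map fun b => b / e + 1 := by
    apply Multiset.map_congr rfl
    intro b _
    simp [Function.comp]
  rw [h]
  rw [show (B.map fun b => b / e + 1) = B.map fun b => b / e + (fun _ : ℕ => 1) b from rfl]
  rw [Multiset.sum_map_add]
  simp

lemma multiset_range_sum (n : ℕ) (F : ℕ → ℕ) :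
    ((range n).map F).sum = ∑ j ∈ Finset.range n, F j := rfl

lemma runnerCount_core (e d : ℕ) (hd : d < e) (B : Multiset ℕ) :
    runnerCount e d (coreBeta e B) = runnerCount e d B := by
  rw [show runnerCount e d (coreBeta e B)
      = card ((coreBeta e B).filter fun b => b % e = d) from rfl]
  rw [coreBeta, my_filter_bind, Multiset.card_bind]
  have h : ((range e).map (card ∘ fun j =>
      ((range (runnerCount e j B)).map fun i => j + i * e).filter fun b => b % e = d))
      = (range e).map fun j => if j = d then runnerCount e j B else 0 := by
    apply Multiset.map_congr rfl
    intro j hj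
    rw [Multiset.mem_range] at hj
    simp only [Function.comp]
    rw [Multiset.filter_map, Multiset.card_map]
    have hmod : ∀ i : ℕ, (j + i * e) % e = j := by
      intro i
      rw [Nat.add_mul_mod_self_right]
      exact Nat.mod_eq_of_lt hj
    by_cases hjd : j = d
    · rw [if_pos hjd]
      rw [Multiset.filter_congr (q := fun _ => True)
          (fun i _ => iff_true_intro (by show (j + i * e) % e = d; rw [hmod i]; exact hjd))]
      rw [Multiset.filter_eq_self.mpr fun a _ => trivial, Multiset.card_range]
    · rw [if_neg hjd]
      rw [Multiset.card_eq_zero, Multiset.filter_eq_nil]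
      intro i _ hi
      exact hjd ((hmod i) ▸ hi)
  rw [h, multiset_range_sum]
  rw [Finset.sum_eq_single_of_mem d (Finset.mem_range.mpr hd)
      (fun j _ hne => if_neg hne)]
  rw [if_pos rfl]

lemma count_resmap (e : ℕ) (he : 0 < e) (B : Multiset ℕ) (j : ℕ) :
    count j (B.map fun b => b % e) = if j < e then runnerCount e j B else 0 := by
  rw [Multiset.count_map]
  split
  · rw [show runnerCount e j B = card (B.filter fun b => b % e = j) from rfl]
    rw [Multiset.filter_congr (fun b _ => eq_comm)]
  · next h =>
      rw [Multiset.card_eq_zero, Multiset.filter_eq_nil]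
      intro b _ hb
      have := Nat.mod_lt b he
      omega

lemma le_runner_iff (e x i : ℕ) (he : 0 < e) : x ≤ x % e + i * e ↔ x / e ≤ i := by
  have h := Nat.mod_add_div' x e
  constructor
  · intro h1
    by_contra h2
    push_neg at h2
    have h3 : i * e < x / e * e := (Nat.mul_lt_mul_right he).mpr h2
    omega
  · intro h1
    have h3 : x / e * e ≤ i * e := Nat.mul_le_mul_right e h1
    omega

lemma eExt_core_le (e : ℕ) (he : 0 < e) (B : Multiset ℕ) (hB : B.Nodup) :
    eExt e (coreBeta e B) ≤ eExt e B := by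
  rw [Multiset.le_iff_count]
  intro x
  rw [count_eExt e he, count_eExt e he]
  have hs : x % e < e := Nat.mod_lt _ he
  -- LHS
  have hL : card ((coreBeta e B).filter fun b => b % e = x % e ∧ x ≤ b)
      = runnerCount e (x % e) B - x / e := by
    rw [coreBeta, my_filter_bind, Multiset.card_bind]
    have h : ((range e).map (card ∘ fun j =>
        ((range (runnerCount e j B)).map fun i => j + i * e).filter
          fun b => b % e = x % e ∧ x ≤ b))
        = (range e).map fun j =>
            if j = x % e then runnerCount e j B - x / e else 0 := by
      apply Multiset.map_congr rfl
      intro j hj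
      rw [Multiset.mem_range] at hj
      simp only [Function.comp]
      rw [Multiset.filter_map, Multiset.card_map]
      have hmod : ∀ i : ℕ, (j + i * e) % e = j := by
        intro i
        rw [Nat.add_mul_mod_self_right]
        exact Nat.mod_eq_of_lt hj
      by_cases hjd : j = x % e
      · rw [if_pos hjd]
        rw [Multiset.filter_congr (q := fun i => x / e ≤ i) ?_, card_filter_range_le]
        intro i _
        simp only [Function.comp, hmod, hjd]
        subst hjd
        rw [le_runner_iff e x i he]
        tauto
      · rw [if_neg hjd]
        rw [Multiset.card_eq_zero, Multiset.filter_eq_nil]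
        rintro i _ ⟨hi, _⟩
        exact hjd ((hmod i) ▸ hi)
    rw [h, multiset_range_sum]
    rw [Finset.sum_eq_single_of_mem (x % e) (Finset.mem_range.mpr hs)
        (fun j _ hne => if_neg hne)]
    rw [if_pos rfl]
  rw [hL]
  -- RHS lower bound
  have hsplit : card (B.filter fun b => b % e = x % e)
      = card (B.filter fun b => b % e = x % e ∧ x ≤ b)
        + card (B.filter fun b => b % e = x % e ∧ ¬ x ≤ b) := by
    rw [show (B.filter fun b => b % e = x % e ∧ x ≤ b)
        = (B.filter fun b => b % e = x % e).filter (fun b => x ≤ b) from ?_,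
      show (B.filter fun b => b % e = x % e ∧ ¬ x ≤ b)
        = (B.filter fun b => b % e = x % e).filter (fun b => ¬ x ≤ b) from ?_]
    · rw [← card_add, Multiset.filter_add_not]
    · rw [Multiset.filter_filter]
      apply Multiset.filter_congr
      intro b _
      tauto
    · rw [Multiset.filter_filter]
      apply Multiset.filter_congr
      intro b _
      tauto
  have hsmall : card (B.filter fun b => b % e = x % e ∧ ¬ x ≤ b) ≤ x / e := by
    set N := B.filter fun b => b % e = x % e ∧ ¬ x ≤ b with hN
    have hNnd : N.Nodup := Multiset.Nodup.filter _ hB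
    have hmapnd : (N.map fun b => b / e).Nodup := by
      refine Multiset.Nodup.map_on ?_ hNnd
      intro b1 h1 b2 h2 hdiv
      rw [hN, Multiset.mem_filter] at h1 h2
      have e1 := Nat.mod_add_div' b1 e
      have e2 := Nat.mod_add_div' b2 e
      have h5 : b1 % e = b2 % e := by rw [h1.2.1, h2.2.1]
      have h4 : b1 / e * e = b2 / e * e := by rw [hdiv]
      omega
    have hsub : (N.map fun b => b / e) ≤ range (x / e) := by
      rw [Multiset.le_iff_subset hmapnd]
      intro y hy
      rw [Multiset.mem_map] at hy
      obtain ⟨b, hb, rfl⟩ := hy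
      rw [hN, Multiset.mem_filter] at hb
      obtain ⟨_, hm, hlt⟩ := hb
      push_neg at hlt
      rw [Multiset.mem_range]
      by_contra hge
      push_neg at hge
      have h3 : x / e * e ≤ b / e * e := Nat.mul_le_mul_right e hge
      have e1 := Nat.mod_add_div' b e
      have e2 := Nat.mod_add_div' x e
      omega
    calc card N = card (N.map fun b => b / e) := (Multiset.card_map _ _).symm
      _ ≤ card (range (x / e)) := Multiset.card_le_card hsub
      _ = x / e := Multiset.card_range _
  rw [show runnerCount e (x % e) B = card (B.filter fun b => b % e = x % e) from rfl]
  omega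


lemma lk_nrk_core (e d : ℕ) (B : Multiset ℕ) (he0 : 0 < e) (hd : d < e)
    (hB : B.Nodup)
    (hK : ∀ b ∈ B, b % e = d → b < d + runnerCount e d B * e) :
    Multiset.card ((eExt e B).filter fun x => d + runnerCount e d B * e < x)
      + ((B.filter fun a => a % e = d).map fun a =>
          Multiset.card (B.filter fun b => a < b ∧ ¬ b % e = d)).sum
      = (B.map fun b => if b % e = d then 0
          else b / e + (if d < b % e then 1 else 0)).sum := by
  have hrun := runner_eq e d B he0 hB hK
  have hLk : Multiset.card ((eExt e B).filter fun x => d + runnerCount e d B * e < x)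
      = (B.map fun b => card ((range (b / e + 1)).filter
          fun j => d + runnerCount e d B * e < b - j * e)).sum := by
    rw [eExt, my_filter_bind, Multiset.card_bind]
    congr 1
    apply Multiset.map_congr rfl
    intro b _
    simp only [Function.comp]
    rw [Multiset.filter_map, Multiset.card_map]
    rfl
  have hnrk : ((B.filter fun a => a % e = d).map fun a =>
        Multiset.card (B.filter fun b => a < b ∧ ¬ b % e = d)).sum
      = (B.map fun b => card ((B.filter fun a => a % e = d).filter
          fun a => a < b ∧ ¬ b % e = d)).sum :=
    sum_card_filter_swap _ _ _
  rw [hLk, hnrk, ← Multiset.sum_map_add]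
  apply congrArg Multiset.sum
  apply Multiset.map_congr rfl
  intro b hb
  by_cases hbd : b % e = d
  · rw [if_pos hbd]
    have h1 : ((range (b / e + 1)).filter
        fun j => d + runnerCount e d B * e < b - j * e) = 0 := by
      rw [Multiset.filter_eq_nil]
      intro j _ hcon
      have hlt := hK b hb hbd
      exact absurd (lt_of_lt_of_le hcon (le_trans (Nat.sub_le b _) (le_of_lt hlt)))
        (lt_irrefl _)
    have h2 : ((B.filter fun a => a % e = d).filter
        fun a => a < b ∧ ¬ b % e = d) = 0 := by
      rw [Multiset.filter_eq_nil]
      rintro a _ ⟨_, hcon⟩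
      exact hcon hbd
    rw [h1, h2]
    simp
  · rw [if_neg hbd]
    have hbs : b % e < e := Nat.mod_lt _ he0
    have hb' : b % e + b / e * e = b := Nat.mod_add_div' b e
    by_cases hι : d < b % e
    · rw [if_pos hι]
      have e1 : card ((range (b / e + 1)).filter
          fun j => d + runnerCount e d B * e < b - j * e)
          = min (b / e + 1) (b / e + 1 - runnerCount e d B) := by
        rw [Multiset.filter_congr
          (q := fun j => j < b / e + 1 - runnerCount e d B)
          (fun j hj => by
            rw [Multiset.mem_range] at hj
            have hj' : j ≤ b / e := by omega
            rw [sub_mul_eq b j e hj',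
              key_iff e d (b % e) (runnerCount e d B) (b / e - j) hd hbs hbd,
              if_pos hι]
            omega), card_filter_range_lt]
      have e2 : card ((B.filter fun a => a % e = d).filter
          fun a => a < b ∧ ¬ b % e = d)
          = min (runnerCount e d B) (b / e + 1) := by
        rw [hrun, Multiset.filter_map, Multiset.card_map]
        rw [Multiset.filter_congr (q := fun i => i < b / e + 1)
          (fun i _ => by
            show (d + i * e < b ∧ ¬ b % e = d) ↔ i < b / e + 1
            rw [show (d + i * e < b) ↔ (d + i * e < b % e + b / e * e) from by rw [hb'],
              key_iff e d (b % e) i (b / e) hd hbs hbd, if_pos hι]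
            simp [hbd]), card_filter_range_lt]
      rw [e1, e2, Nat.min_def, Nat.min_def]
      split_ifs <;> omega
    · rw [if_neg hι]
      have e1 : card ((range (b / e + 1)).filter
          fun j => d + runnerCount e d B * e < b - j * e)
          = min (b / e + 1) (b / e - runnerCount e d B) := by
        rw [Multiset.filter_congr
          (q := fun j => j < b / e - runnerCount e d B)
          (fun j hj => by
            rw [Multiset.mem_range] at hj
            have hj' : j ≤ b / e := by omega
            rw [sub_mul_eq b j e hj',
              key_iff e d (b % e) (runnerCount e d B) (b / e - j) hd hbs hbd,
              if_neg hι]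
            omega), card_filter_range_lt]
      have e2 : card ((B.filter fun a => a % e = d).filter
          fun a => a < b ∧ ¬ b % e = d)
          = min (runnerCount e d B) (b / e) := by
        rw [hrun, Multiset.filter_map, Multiset.card_map]
        rw [Multiset.filter_congr (q := fun i => i < b / e)
          (fun i _ => by
            show (d + i * e < b ∧ ¬ b % e = d) ↔ i < b / e
            rw [show (d + i * e < b) ↔ (d + i * e < b % e + b / e * e) from by rw [hb'],
              key_iff e d (b % e) i (b / e) hd hbs hbd, if_neg hι]
            simp [hbd]), card_filter_range_lt]
      rw [e1, e2, Nat.min_def, Nat.min_def]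
      split_ifs <;> omega

end S14

namespace S14
open Multiset

lemma Gsum (e d : ℕ) (B : Multiset ℕ) :
    (B.map fun b => if b % e = d then 0 else b / e + (if d < b % e then 1 else 0)).sum
      + ((B.filter fun b => b % e = d).map fun b => b / e).sum
    = (B.map fun b => b / e).sum + card (B.filter fun b => d < b % e) := by
  induction B using Multiset.induction with
  | empty => simp
  | cons b B ih =>
      simp only [Multiset.map_cons, Multiset.sum_cons, Multiset.filter_cons]
      split_ifs <;>
        simp only [Multiset.map_cons, Multiset.sum_cons, Multiset.card_add,
          Multiset.card_singleton, Multiset.map_zero, Multiset.sum_zero,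
          Multiset.card_zero, Multiset.map_add, Multiset.sum_add,
          Multiset.map_singleton, Multiset.sum_singleton, zero_add, add_zero] <;> omega

end S14

/-- for k-empty λ, μ with the same e-core and e-weight,
𝔏_k(λ) = 𝔏_k(μ) iff n_{r,k}(λ) = n_{r,k}(μ). -/
theorem stmt14 (e k r : ℕ) (he : 2 ≤ e) (hk : k < e) (f g : ℕ → ℕ)
    (hf : IsPartition f) (hg : IsPartition g)
    (hrf : conj f 0 ≤ r) (hrg : conj g 0 ≤ r)
    (hcore : coreBeta e (betaSet f r) = coreBeta e (betaSet g r))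
    (hw : eWeight e (betaSet f r) = eWeight e (betaSet g r))
    (hkf : KEmpty e k r f) (hkg : KEmpty e k r g) :
    Lk e k r f = Lk e k r g ↔
      nrk e ((r + k) % e) (betaSet f r) = nrk e ((r + k) % e) (betaSet g r) := by
  have he0 : 0 < e := by omega
  have hd : (r + k) % e < e := Nat.mod_lt _ he0
  have hBnd : (betaSet f r).Nodup := S14.betaSet_nodup f hf.1 r
  have hCnd : (betaSet g r).Nodup := S14.betaSet_nodup g hg.1 r
  have hrc : ∀ j, j < e →
      runnerCount e j (betaSet f r) = runnerCount e j (betaSet g r) := by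
    intro j hj
    rw [← S14.runnerCount_core e j hj (betaSet f r), hcore,
      S14.runnerCount_core e j hj (betaSet g r)]
  have hres : (betaSet f r).map (fun b => b % e)
      = (betaSet g r).map (fun b => b % e) := by
    rw [Multiset.ext]
    intro j
    rw [S14.count_resmap e he0, S14.count_resmap e he0]
    split
    · exact hrc j ‹_›
    · rfl
  have hle1 := S14.eExt_core_le e he0 (betaSet f r) hBnd
  have hle2 := S14.eExt_core_le e he0 (betaSet g r) hCnd
  have l1 := Multiset.card_le_card hle1
  have l2 := Multiset.card_le_card hle2
  have hcard : Multiset.card (eExt e (betaSet f r))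
      = Multiset.card (eExt e (betaSet g r)) := by
    have w1 : eWeight e (betaSet f r) = Multiset.card (eExt e (betaSet f r))
        - Multiset.card (eExt e (coreBeta e (betaSet f r))) := by
      rw [eWeight, weightMS, Multiset.card_sub hle1]
    have w2 : eWeight e (betaSet g r) = Multiset.card (eExt e (betaSet g r))
        - Multiset.card (eExt e (coreBeta e (betaSet g r))) := by
      rw [eWeight, weightMS, Multiset.card_sub hle2]
    rw [w1, w2, hcore] at hw
    rw [hcore] at l1
    omega
  have hsum : ((betaSet f r).map fun b => b / e).sum
      = ((betaSet g r).map fun b => b / e).sum := by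
    have c1 := S14.card_eExt e (betaSet f r)
    have c2 := S14.card_eExt e (betaSet g r)
    rw [S14.card_betaSet] at c1 c2
    omega
  have hrunf := S14.runner_eq e ((r + k) % e) (betaSet f r) he0 hBnd hkf
  have hrung := S14.runner_eq e ((r + k) % e) (betaSet g r) he0 hCnd hkg
  have hrunpart : (((betaSet f r).filter fun b => b % e = (r + k) % e).map
        fun b => b / e).sum
      = (((betaSet g r).filter fun b => b % e = (r + k) % e).map
        fun b => b / e).sum := by
    rw [hrunf, hrung, hrc ((r + k) % e) hd]
  have hcardlt : Multiset.card ((betaSet f r).filter fun b => (r + k) % e < b % e)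
      = Multiset.card ((betaSet g r).filter fun b => (r + k) % e < b % e) := by
    have haux : ∀ B : Multiset ℕ,
        Multiset.card (B.filter fun b => (r + k) % e < b % e)
          = Multiset.card (((B.map fun b => b % e)).filter
              fun x => (r + k) % e < x) := by
      intro B
      rw [Multiset.filter_map, Multiset.card_map]
      rfl
    rw [haux, haux, hres]
  have g1 := S14.Gsum e ((r + k) % e) (betaSet f r)
  have g2 := S14.Gsum e ((r + k) % e) (betaSet g r)
  have k1 : Lk e k r f + nrk e ((r + k) % e) (betaSet f r)
      = ((betaSet f r).map fun b => if b % e = (r + k) % e then 0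
          else b / e + (if (r + k) % e < b % e then 1 else 0)).sum :=
    S14.lk_nrk_core e ((r + k) % e) (betaSet f r) he0 hd hBnd hkf
  have k2 : Lk e k r g + nrk e ((r + k) % e) (betaSet g r)
      = ((betaSet g r).map fun b => if b % e = (r + k) % e then 0
          else b / e + (if (r + k) % e < b % e then 1 else 0)).sum :=
    S14.lk_nrk_core e ((r + k) % e) (betaSet g r) he0 hd hCnd hkg
  omega
end

section
/- For l < m with i = (m - l) mod e ≠ 0, in the truncated Fock space the commutation relations imply: u_m ∧ u_l = -q·(u_l ∧ u_m) + (q^{-1} - q)·(u_{l+e} ∧ u_{m-e} + u_{l+2e} ∧ u_{m-2e} + … + u_{m-i} ∧ u_{l+i}). -/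
open scoped BigOperators

noncomputable section

abbrev K : Type := RatFunc ℚ

noncomputable def q : K := RatFunc.X

abbrev W (r : ℕ) : Type := (Fin r → ℕ) →₀ K

def fstIdx (e l m t : ℕ) : ℕ :=
  if t % 2 = 0 then m - (t / 2) * e - (m - l) % e else m - (t / 2 + 1) * e

noncomputable def relElem (e l m : ℕ) : W 2 :=
  if (m - l) % e = 0 then
    Finsupp.single ![l, m] 1 + Finsupp.single ![m, l] 1
  else
    Finsupp.single ![l, m] 1 + q⁻¹ • Finsupp.single ![m, l] 1 -
      (q⁻¹ ^ 2 - 1) •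
        ∑ t ∈ Finset.range (m - l),
          (if l + m < 2 * fstIdx e l m t then
            (-q⁻¹) ^ t • Finsupp.single ![fstIdx e l m t, l + m - fstIdx e l m t] (1 : K)
          else 0)

def relSet (e r : ℕ) : Set (W r) :=
  { x | ∃ (w : Fin r → ℕ) (p p' : Fin r), (p : ℕ) + 1 = (p' : ℕ) ∧ w p ≤ w p' ∧
      x = Finsupp.mapDomain
            (fun v : Fin 2 → ℕ => Function.update (Function.update w p (v 0)) p' (v 1))
            (relElem e (w p) (w p')) }

def FockRel (e r : ℕ) : Submodule K (W r) := Submodule.span K (relSet e r)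

abbrev Fock (e r : ℕ) : Type := W r ⧸ FockRel e r

def wedge (e r : ℕ) (w : Fin r → ℕ) : Fock e r :=
  Submodule.Quotient.mk (Finsupp.single w 1)

def StrictDec {r : ℕ} (w : Fin r → ℕ) : Prop := ∀ a b : Fin r, a < b → w b < w a

def betaTuple (r : ℕ) (f : ℕ → ℕ) : Fin r → ℕ := fun i => f i + (r - 1 - i)

noncomputable def barK (x : K) : K :=
  Polynomial.eval₂ (algebraMap ℚ K) q⁻¹ x.num / Polynomial.eval₂ (algebraMap ℚ K) q⁻¹ x.denom

open Classical in
noncomputable def orderedRep (e r : ℕ) (x : W r) : W r :=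
  if h : ∃ y : W r, (∀ t ∈ y.support, StrictDec t) ∧
      (Submodule.Quotient.mk y : Fock e r) = Submodule.Quotient.mk x
  then h.choose else 0

noncomputable def bcoef (e r : ℕ) (t : Fin r → ℕ) : K :=
  orderedRep e r (Finsupp.single (fun i => t i.rev) 1) t

noncomputable def barVec (e r : ℕ) (x : W r) : Fock e r :=
  x.sum fun t c =>
    (barK c / bcoef e r t) •
      (Submodule.Quotient.mk (Finsupp.single (fun i : Fin r => t i.rev) 1) : Fock e r)

end

/-! The relation for `(l, m)` gives `u_m ∧ u_l = -q u_l ∧ u_m + (q⁻¹ - q) T(l, m)`, so everything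
reduces to evaluating the tail sum `T(l, m)` (`swapSum e l m`). With `N = (m - l) / e`, its first
term is `u_{l+Ne} ∧ u_{m-Ne}`, its second is `-q⁻¹ u_{m-e} ∧ u_{l+e}`, and the remaining terms are
`q⁻² T(l + e, m - e)`. Rewriting `u_{m-e} ∧ u_{l+e}` by the relation for `(l + e, m - e)` collapses
the last two pieces to `u_{l+e} ∧ u_{m-e} + T(l + e, m - e)`, so induction on `N` in steps of two
gives `T(l, m) = ∑_{j=1}^N u_{l+je} ∧ u_{m-je}`. -/

open Finset

section FieldModule

variable {F V : Type*} [Field F] [AddCommGroup V] [Module F V] {x : F} {a b s : V}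

lemma eq_neg_smul_add_smul_of_add_inv_smul_sub_eq_zero (hx : x ≠ 0)
    (h : a + x⁻¹ • b - (x⁻¹ ^ 2 - 1) • s = 0) : b = -x • a + (x⁻¹ - x) • s := by
  linear_combination (norm := skip) x • h
  match_scalars <;> field_simp <;> ring

lemma neg_inv_smul_add_inv_sq_smul_eq (hx : x ≠ 0) (h : b = -x • a + (x⁻¹ - x) • s) :
    -x⁻¹ • b + x⁻¹ ^ 2 • s = a + s := by
  rw [h]
  match_scalars <;> field_simp
  ring

end FieldModule

lemma sum_Icc_one_add_two {M : Type*} [AddCommMonoid M] (f : ℕ → M) (N : ℕ) :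
    ∑ j ∈ Icc 1 (N + 2), f j = f 1 + ∑ j ∈ Icc 1 N, f (j + 1) + f (N + 2) := by
  simp only [← Ico_add_one_right_eq_Icc, sum_Ico_eq_sum_range, Nat.add_sub_cancel]
  rw [sum_range_succ, sum_range_succ']
  simp only [add_comm 1, zero_add]
  abel

lemma q_ne_zero : q ≠ 0 := RatFunc.X_ne_zero

section FstIdx

variable {e l m t : ℕ}

lemma fstIdx_zero : fstIdx e l m 0 = m - (m - l) % e := by
  simp [fstIdx]

lemma fstIdx_one : fstIdx e l m 1 = m - e := by
  simp [fstIdx]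

lemma fstIdx_le_sub (ht : t ≠ 0) : fstIdx e l m t ≤ m - e := by
  unfold fstIdx
  split_ifs
  · have : e ≤ t / 2 * e := Nat.le_mul_of_pos_left e (by omega)
    omega
  · have : e ≤ (t / 2 + 1) * e := Nat.le_mul_of_pos_left e (by omega)
    omega

lemma lt_sub_of_lt_two_mul_fstIdx (he : 0 < e) (h : l + m < 2 * fstIdx e l m t) :
    t < m - l := by
  unfold fstIdx at h
  split_ifs at h
  · have : t / 2 ≤ t / 2 * e := Nat.le_mul_of_pos_right _ he
    omega
  · have : t / 2 + 1 ≤ (t / 2 + 1) * e := Nat.le_mul_of_pos_right _ he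
    omega

lemma fstIdx_add_two (h : 2 * e ≤ m - l) : fstIdx e l m (t + 2) = fstIdx e (l + e) (m - e) t := by
  have hmod : (m - e - (l + e)) % e = (m - l) % e := by
    rw [show m - l = m - e - (l + e) + e * 2 by omega, Nat.add_mul_mod_self_left]
  simp only [fstIdx, Nat.add_mod_right, Nat.add_div_right t two_pos, hmod, add_mul, one_mul]
  split_ifs <;> omega

end FstIdx

-- `l + m < 2 * f` says that `(f, l + m - f)` is strictly decreasing: unordered terms are dropped.
noncomputable def swapTerm (e l m t : ℕ) : Fock e 2 :=
  if l + m < 2 * fstIdx e l m t then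
    (-q⁻¹) ^ t • wedge e 2 ![fstIdx e l m t, l + m - fstIdx e l m t]
  else 0

noncomputable def swapSum (e l m : ℕ) : Fock e 2 := ∑ t ∈ range (m - l), swapTerm e l m t

lemma mk_relElem_eq_zero (e : ℕ) {l m : ℕ} (hlm : l ≤ m) :
    (Submodule.Quotient.mk (relElem e l m) : Fock e 2) = 0 := by
  rw [Submodule.Quotient.mk_eq_zero]
  apply Submodule.subset_span
  refine ⟨![l, m], 0, 1, rfl, hlm, ?_⟩
  have hid : (fun v : Fin 2 → ℕ =>
      Function.update (Function.update ![l, m] 0 (v 0)) 1 (v 1)) = id := by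
    funext v a
    fin_cases a <;> simp [Function.update]
  simp only [Matrix.cons_val_zero, Matrix.cons_val_one, hid, Finsupp.mapDomain_id]

theorem wedge_swap (e : ℕ) {l m : ℕ} (hlm : l ≤ m) (hi : (m - l) % e ≠ 0) :
    wedge e 2 ![m, l] = -q • wedge e 2 ![l, m] + (q⁻¹ - q) • swapSum e l m := by
  have hrel := mk_relElem_eq_zero e hlm
  rw [relElem, if_neg hi, ← Submodule.mkQ_apply] at hrel
  simp only [map_sub, map_add, map_smul, map_sum, apply_ite (FockRel e 2).mkQ, map_zero] at hrel
  exact eq_neg_smul_add_smul_of_add_inv_smul_sub_eq_zero q_ne_zero hrel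

section SwapTerm

variable {e l m : ℕ}

lemma swapTerm_eq_zero_of_sub_le {t : ℕ} (he : 0 < e) (h : m - l ≤ t) : swapTerm e l m t = 0 :=
  if_neg fun hlt => (lt_sub_of_lt_two_mul_fstIdx he hlt).not_ge h

lemma swapTerm_eq_zero_of_sub_le_two_mul {t : ℕ} (h : m - l ≤ 2 * e) (ht : t ≠ 0) :
    swapTerm e l m t = 0 :=
  if_neg fun hlt => by have := fstIdx_le_sub (e := e) (l := l) (m := m) ht; omega

lemma swapTerm_zero_of_sub_lt (h : m - l < e) : swapTerm e l m 0 = 0 := by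
  refine if_neg ?_
  rw [fstIdx_zero, Nat.mod_eq_of_lt h]
  omega

lemma swapTerm_zero {N i : ℕ} (h : m - l = N * e + i) (hie : i < e) (hN : N ≠ 0) :
    swapTerm e l m 0 = wedge e 2 ![l + N * e, m - N * e] := by
  have hmod : (m - l) % e = i := by rw [h, Nat.mul_add_mod_self_right, Nat.mod_eq_of_lt hie]
  have hNe : e ≤ N * e := Nat.le_mul_of_pos_left e (Nat.pos_of_ne_zero hN)
  rw [swapTerm, fstIdx_zero, hmod, if_pos (by omega), pow_zero, one_smul]
  congr 3 <;> omega

lemma swapTerm_one (h : 2 * e < m - l) : swapTerm e l m 1 = -q⁻¹ • wedge e 2 ![m - e, l + e] := by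
  rw [swapTerm, fstIdx_one, if_pos (by omega), pow_one]
  congr 4
  omega

lemma swapTerm_add_two {t : ℕ} (h : 2 * e ≤ m - l) :
    swapTerm e l m (t + 2) = q⁻¹ ^ 2 • swapTerm e (l + e) (m - e) t := by
  have hsum : l + e + (m - e) = l + m := by omega
  rw [swapTerm, swapTerm, fstIdx_add_two h, hsum]
  split_ifs
  · rw [smul_smul, pow_add, neg_sq, mul_comm]
  · rw [smul_zero]

end SwapTerm

section SwapSum

variable {e l m : ℕ}

lemma swapSum_eq_sum_range {M : ℕ} (he : 0 < e) (h : m - l ≤ M) :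
    swapSum e l m = ∑ t ∈ range M, swapTerm e l m t :=
  sum_subset (range_subset_range.2 h) fun _ _ ht =>
    swapTerm_eq_zero_of_sub_le he (by simpa using ht)

lemma swapSum_eq_swapTerm_zero (hlm : l < m) (h : m - l ≤ 2 * e) :
    swapSum e l m = swapTerm e l m 0 :=
  sum_eq_single_of_mem 0 (by simpa using hlm) fun _ _ ht =>
    swapTerm_eq_zero_of_sub_le_two_mul h ht

lemma swapSum_eq_of_two_mul_lt (he : 0 < e) (h : 2 * e < m - l) :
    swapSum e l m = swapTerm e l m 0
      + (-q⁻¹ • wedge e 2 ![m - e, l + e] + q⁻¹ ^ 2 • swapSum e (l + e) (m - e)) := by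
  obtain ⟨M, hM⟩ : ∃ M, m - l = M + 2 := ⟨m - l - 2, by omega⟩
  rw [swapSum, hM, sum_range_succ', sum_range_succ', ← swapTerm_one h,
    swapSum_eq_sum_range (M := M) he (by omega), smul_sum]
  simp only [swapTerm_add_two h.le]
  abel

theorem swapSum_eq_sum_Icc {i : ℕ} (hi : 0 < i) (hie : i < e) (N : ℕ) :
    ∀ {l m : ℕ}, m - l = N * e + i →
      swapSum e l m = ∑ j ∈ Icc 1 N, wedge e 2 ![l + j * e, m - j * e] := by
  induction N using Nat.twoStepInduction with
  | zero =>
    intro l m h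
    rw [swapSum_eq_swapTerm_zero (by omega) (by omega), swapTerm_zero_of_sub_lt (by omega)]
    rfl
  | one =>
    intro l m h
    rw [swapSum_eq_swapTerm_zero (by omega) (by omega), swapTerm_zero h hie one_ne_zero,
      Icc_self, sum_singleton]
  | more N ih _ =>
    intro l m h
    have hstep : m - e - (l + e) = N * e + i := by rw [add_mul] at h; omega
    have hswap := wedge_swap e (l := l + e) (m := m - e) (by omega) (by
      rw [hstep, Nat.mul_add_mod_self_right, Nat.mod_eq_of_lt hie]; omega)
    rw [swapSum_eq_of_two_mul_lt (by omega) (by rw [add_mul] at h; omega),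
      neg_inv_smul_add_inv_sq_smul_eq q_ne_zero hswap, ih hstep, swapTerm_zero h hie (by omega),
      sum_Icc_one_add_two]
    have hshift (j : ℕ) : wedge e 2 ![l + e + j * e, m - e - j * e]
        = wedge e 2 ![l + (j + 1) * e, m - (j + 1) * e] := by
      rw [add_one_mul, add_comm (j * e) e, ← add_assoc, Nat.sub_sub]
    simp only [hshift, one_mul]
    abel

end SwapSum

/-- for l < m with i = (m-l) mod e ≠ 0, in the truncated Fock space
u_m ∧ u_l = -q·(u_l ∧ u_m) + (q⁻¹ - q)·(u_{l+e} ∧ u_{m-e} + … + u_{m-i} ∧ u_{l+i}). -/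
theorem stmt15 (e : ℕ) (he : 2 ≤ e) (l m : ℕ) (hlm : l < m)
    (hi : (m - l) % e ≠ 0) :
    wedge e 2 ![m, l]
      = -q • wedge e 2 ![l, m]
        + (q⁻¹ - q) • ∑ j ∈ Finset.Icc 1 ((m - l - (m - l) % e) / e),
            wedge e 2 ![l + j * e, m - j * e] := by
  have hdiv : (m - l - (m - l) % e) / e * e = m - l - (m - l) % e :=
    Nat.div_mul_cancel (Nat.dvd_sub_mod _)
  rw [wedge_swap e hlm.le hi, swapSum_eq_sum_Icc (Nat.pos_of_ne_zero hi) (Nat.mod_lt _ (by omega))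
    ((m - l - (m - l) % e) / e) (by have := Nat.mod_le (m - l) e; omega)]
end

section
/- Let e ≥ 2 and let ν be an e-restricted partition. Applying the conjugate Mullineux-rim construction (Definition of f₁ > g₁ > … > f_u > g_u on the abacus of ν), one has rim'(ν) = rim(ν') and ν^▽ = ((ν')^△)'. -/
open scoped BigOperators

noncomputable def psize (f : ℕ → ℕ) : ℕ := ∑ i ∈ Finset.range (conj f 0), f i

def phi (e d z : ℕ) : ℕ := z - (z + e - d) / e

def removeRunnerB (e d : ℕ) (B : Multiset ℕ) : Multiset ℕ :=
  (B.filter fun b => ¬ b % e = d).map (phi e d)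

def removeRunnerP (e k r : ℕ) (f : ℕ → ℕ) : ℕ → ℕ :=
  partOfBeta (removeRunnerB e ((r + k) % e) (betaSet f r))

def ERegular (e : ℕ) (f : ℕ → ℕ) : Prop := ¬ ∃ i : ℕ, f i = f (i + e - 1) ∧ 0 < f i

def ERestricted (e : ℕ) (f : ℕ → ℕ) : Prop := ∀ i : ℕ, f i < f (i + 1) + e

noncomputable def firstGap (B : Multiset ℕ) : ℕ := sInf {p : ℕ | p ∉ B}

noncomputable def lastBead (B : Multiset ℕ) : ℕ := sSup {p : ℕ | p ∈ B}

def rimDown (B : Multiset ℕ) (L : List (ℕ × ℕ)) : Multiset ℕ :=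
  (B - ↑(L.map Prod.fst)) + ↑(L.map Prod.snd)

def rimLen (L : List (ℕ × ℕ)) : ℕ := (L.map fun p => p.1 - p.2).sum

def RimSeq (e : ℕ) (B : Multiset ℕ) (L : List (ℕ × ℕ)) : Prop :=
  L ≠ [] ∧
  (L.flatMap fun p => [p.1, p.2]).Chain' (· > ·) ∧
  (∀ p ∈ L, p.1 ∈ B ∧ p.2 ∉ B) ∧
  (L.headI.1 ∈ B ∧ ∀ x ∈ B, x ≤ L.headI.1) ∧
  (∀ i : ℕ, i + 1 < L.length →
    L[i]!.1 % e = L[i]!.2 % e ∧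
    (∀ j : ℕ, 1 ≤ j → L[i]!.2 + j * e < L[i]!.1 → L[i]!.2 + j * e ∈ B) ∧
    (∀ p : ℕ, L[i + 1]!.1 < p → p < L[i]!.2 → p ∉ B)) ∧
  ((L.getLast!.1 % e = L.getLast!.2 % e ∧
      (∀ j : ℕ, 1 ≤ j → L.getLast!.2 + j * e < L.getLast!.1 → L.getLast!.2 + j * e ∈ B) ∧
      (∀ p : ℕ, firstGap B ≤ p → p < L.getLast!.2 → p ∉ B)) ∨
    ((∀ j : ℕ, 1 ≤ j → j * e ≤ L.getLast!.1 → L.getLast!.1 - j * e ∈ B) ∧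
      L.getLast!.2 = firstGap B))

def RimSeq' (e : ℕ) (B : Multiset ℕ) (L : List (ℕ × ℕ)) : Prop :=
  L ≠ [] ∧
  (L.flatMap fun p => [p.1, p.2]).Chain' (· > ·) ∧
  (∀ p ∈ L, p.1 ∈ B ∧ p.2 ∉ B) ∧
  L.getLast!.2 = firstGap B ∧
  (∀ i : ℕ, 0 < i → i < L.length →
    L[i]!.1 % e = L[i]!.2 % e ∧
    (∀ j : ℕ, 1 ≤ j → L[i]!.2 + j * e < L[i]!.1 → L[i]!.2 + j * e ∉ B) ∧
    (∀ p : ℕ, L[i]!.1 < p → p < L[i - 1]!.2 → p ∈ B)) ∧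
  ((L.headI.1 % e = L.headI.2 % e ∧
      (∀ j : ℕ, 1 ≤ j → L.headI.2 + j * e < L.headI.1 → L.headI.2 + j * e ∉ B) ∧
      (∀ p : ℕ, L.headI.1 < p → p ≤ lastBead B → p ∈ B)) ∨
    ((∀ j : ℕ, 1 ≤ j → L.headI.2 + j * e ∉ B) ∧ L.headI.1 = lastBead B))

inductive MullRel (e r : ℕ) : Multiset ℕ → Multiset ℕ → Prop where
  | empty : MullRel e r (Multiset.range r) (Multiset.range r)
  | step (B C : Multiset ℕ) (L M : List (ℕ × ℕ)) :
      RimSeq e B L → RimSeq e C M →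
      MullRel e r (rimDown B L) (rimDown C M) →
      ERegular e (partOfBeta C) →
      rimLen M = rimLen L →
      (r - firstGap C =
        (if rimLen L % e = 0 then rimLen L - (r - firstGap B)
         else rimLen L - (r - firstGap B) + 1)) →
      MullRel e r B C

/-!
Put `N = r + s - 1`. The `s`-bead abacus of `ν'` is the `r`-bead abacus of `ν` with beads and
gaps swapped and positions reflected by `x ↦ N - x`. This reflection turns the conditions
defining the conjugate rim sequence `(f₁, g₁), …, (f_u, g_u)` of `ν` into those defining a rim
sequence `(N - g_u, N - f_u), …, (N - g₁, N - f₁)` of `ν'`; as a rim sequence is determined by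
its abacus, it is the one of `ν'`. Reflection preserves the length of each pair and commutes with
moving beads along the pairs, so after removing the two rims the abaci are again reflected
complements of each other, i.e. they display conjugate partitions.
-/

open Multiset

section ListAux

variable {α : Type*} [Inhabited α] {l : List α}

theorem List.headI_mem_of_ne_nil (h : l ≠ []) : l.headI ∈ l := by
  obtain ⟨a, t, rfl⟩ := List.exists_cons_of_ne_nil h
  simp

theorem List.getLast!_mem_of_ne_nil (h : l ≠ []) : l.getLast! ∈ l := by
  obtain ⟨t, a, rfl⟩ := List.eq_nil_or_concat l |>.resolve_left h
  simp

theorem List.getElem!_mem_of_lt {i : ℕ} (h : i < l.length) : l[i]! ∈ l := by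
  rw [getElem!_pos l i h]
  exact List.getElem_mem h

end ListAux

theorem Nat.sub_mod_eq_of_mod_eq {N a b e : ℕ} (ha : a ≤ N) (hb : b ≤ N) (h : a % e = b % e) :
    (N - a) % e = (N - b) % e :=
  Nat.ModEq.add_right_cancel h (by rw [Nat.sub_add_cancel ha, Nat.sub_add_cancel hb])

section Conjugate

variable {f : ℕ → ℕ}

theorem conj_lt_iff (hf : IsPartition f) (j i : ℕ) : i < conj f j ↔ j + 1 ≤ f i := by
  obtain ⟨hmono, N, hN⟩ := hf
  have hne : {i : ℕ | f i ≤ j}.Nonempty := ⟨N, by simp [hN N le_rfl]⟩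
  obtain ⟨m, hfm, hmin⟩ : ∃ m, f m ≤ j ∧ ∀ i < m, ¬ f i ≤ j :=
    ⟨_, Nat.sInf_mem hne, fun i => Nat.notMem_of_lt_sInf⟩
  have hm : ∀ i, j + 1 ≤ f i ↔ i < m := fun i =>
    ⟨fun h => lt_of_not_ge fun hmi => by have := (hmono hmi).trans hfm; omega,
      fun h => by have := hmin i h; omega⟩
  have hset : {x : ℕ | j + 1 ≤ f x} = Set.Iio m := Set.ext fun i => hm i
  have hconj : conj f j = m := by
    change Nat.card {x : ℕ | j + 1 ≤ f x} = m
    rw [hset, Nat.card_eq_card_toFinset]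
    simp
  rw [hconj, hm]

theorem isPartition_conj (hf : IsPartition f) : IsPartition (conj f) := by
  refine ⟨fun j j' hjj' => ?_, f 0, fun j hj => ?_⟩
  · by_contra! h
    have := (conj_lt_iff hf j' (conj f j)).mp h
    exact lt_irrefl _ ((conj_lt_iff hf j (conj f j)).mpr (by omega))
  · by_contra h
    have := (conj_lt_iff hf j 0).mp (Nat.pos_of_ne_zero h)
    omega

theorem conj_conj (hf : IsPartition f) : conj (conj f) = f := by
  funext j
  have h : ∀ i, i < conj (conj f) j ↔ i < f j := fun i => by
    rw [conj_lt_iff (isPartition_conj hf) j i]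
    have := conj_lt_iff hf i j
    omega
  exact eq_of_forall_lt_iff h

theorem conj_zero_le_iff (hf : IsPartition f) (r : ℕ) : conj f 0 ≤ r ↔ f r = 0 := by
  rw [← not_lt, conj_lt_iff hf]
  omega

end Conjugate

section BetaSet

variable {f : ℕ → ℕ}

theorem mem_betaSet {r x : ℕ} : x ∈ betaSet f r ↔ ∃ i < r, f i + (r - 1 - i) = x := by
  simp [betaSet]

theorem card_betaSet (f : ℕ → ℕ) (r : ℕ) : card (betaSet f r) = r := by
  simp [betaSet]

theorem betaSet_strictAnti (hf : IsPartition f) {r i j : ℕ} (hij : i < j) (hj : j < r) :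
    f j + (r - 1 - j) < f i + (r - 1 - i) := by
  have := hf.1 hij.le
  omega

theorem nodup_betaSet (hf : IsPartition f) (r : ℕ) : (betaSet f r).Nodup := by
  refine (nodup_range r).map_on fun i hi j hj hij => ?_
  rw [mem_range] at hi hj
  rcases lt_trichotomy i j with h | h | h
  · exact absurd hij (betaSet_strictAnti hf h hj).ne'
  · exact h
  · exact absurd hij (betaSet_strictAnti hf h hi).ne

theorem lt_of_mem_betaSet (hf : IsPartition f) {r x : ℕ} (hx : x ∈ betaSet f r) :
    x < f 0 + r := by
  obtain ⟨i, hi, rfl⟩ := mem_betaSet.mp hx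
  have := hf.1 (Nat.zero_le i)
  omega

end BetaSet

section RotCompl

/-- The abacus on positions `0, …, N` rotated by 180° with beads and gaps swapped. -/
def rotCompl (N : ℕ) (C : Multiset ℕ) : Multiset ℕ := (range (N + 1) - C).map (N - ·)

variable {N x : ℕ} {C : Multiset ℕ}

theorem mem_rotCompl : x ∈ rotCompl N C ↔ x ≤ N ∧ N - x ∉ C := by
  simp only [rotCompl, mem_map, mem_sub_of_nodup (nodup_range _), mem_range]
  constructor
  · rintro ⟨y, ⟨hy, hyC⟩, rfl⟩
    exact ⟨by omega, by rwa [Nat.sub_sub_self (by omega)]⟩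
  · rintro ⟨hx, hxC⟩
    exact ⟨N - x, ⟨by omega, hxC⟩, by omega⟩

theorem sub_mem_rotCompl (hx : x ≤ N) : N - x ∈ rotCompl N C ↔ x ∉ C := by
  rw [mem_rotCompl, Nat.sub_sub_self hx]
  exact and_iff_right (Nat.sub_le N x)

theorem nodup_rotCompl : (rotCompl N C).Nodup :=
  (nodup_of_le (Multiset.sub_le_self _ _) (nodup_range _)).map_on fun a ha b hb hab => by
    have := mem_range.mp (mem_of_le (Multiset.sub_le_self _ _) ha)
    have := mem_range.mp (mem_of_le (Multiset.sub_le_self _ _) hb)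
    omega

theorem le_range_succ (hC : C.Nodup) (hCN : ∀ x ∈ C, x ≤ N) : C ≤ range (N + 1) :=
  (le_iff_subset hC).mpr fun x hx => mem_range.mpr (Nat.lt_succ_of_le (hCN x hx))

theorem card_rotCompl (hC : C.Nodup) (hCN : ∀ x ∈ C, x ≤ N) :
    card (rotCompl N C) = N + 1 - card C := by
  rw [rotCompl, card_map, card_sub (le_range_succ hC hCN), card_range]

end RotCompl

theorem betaSet_conj {f : ℕ → ℕ} (hf : IsPartition f) {r s : ℕ} (hr : conj f 0 ≤ r)
    (hs : f 0 ≤ s) (hrs : 0 < r + s) :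
    betaSet (conj f) s = rotCompl (r + s - 1) (betaSet f r) := by
  have hBN : ∀ x ∈ betaSet f r, x ≤ r + s - 1 := fun x hx => by
    have := lt_of_mem_betaSet hf hx
    omega
  refine eq_of_le_of_card_le ((le_iff_subset (nodup_betaSet (isPartition_conj hf) s)).mpr ?_) ?_
  · intro x hx
    obtain ⟨j, hj, rfl⟩ := mem_betaSet.mp hx
    have hcj : conj f j ≤ r := ((isPartition_conj hf).1 (Nat.zero_le j)).trans hr
    refine mem_rotCompl.mpr ⟨by omega, fun hmem => ?_⟩
    obtain ⟨i, hi, hieq⟩ := mem_betaSet.mp hmem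
    have := conj_lt_iff hf j i
    omega
  · rw [card_rotCompl (nodup_betaSet hf r) hBN, card_betaSet, card_betaSet]
    omega

theorem List.Pairwise.getElem_add_sub_le {l : List ℕ} (h : l.Pairwise (· > ·)) {i j : ℕ}
    (hij : i ≤ j) (hj : j < l.length) : l[j] + (j - i) ≤ l[i] := by
  induction j with
  | zero => simp [Nat.le_zero.mp hij]
  | succ j ih =>
    rcases Nat.eq_or_lt_of_le hij with rfl | hlt
    · simp
    · have := ih (by omega) (by omega)
      have := List.pairwise_iff_getElem.mp h j (j + 1) (by omega) hj (by omega)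
      omega

section PartOfBeta

variable {C : Multiset ℕ}

theorem pairwise_gt_reverse_sort (hC : C.Nodup) : (C.sort (· ≤ ·)).reverse.Pairwise (· > ·) := by
  have hnd : (C.sort (· ≤ ·)).Nodup := by rw [← coe_nodup, sort_eq]; exact hC
  rw [List.pairwise_reverse]
  exact ((pairwise_sort C _).and hnd).imp fun h => lt_of_le_of_ne h.1 h.2

theorem partOfBeta_eq_zero {i : ℕ} (h : card C ≤ i) : partOfBeta C i = 0 := by
  rw [partOfBeta, List.getD_eq_default _ _ (by simpa using h), Nat.zero_sub]

theorem partOfBeta_add_eq_getElem (hC : C.Nodup) {i : ℕ} (hi : i < card C) :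
    partOfBeta C i + (card C - 1 - i) = (C.sort (· ≤ ·)).reverse[i]'(by simpa using hi) := by
  have := (pairwise_gt_reverse_sort hC).getElem_add_sub_le (Nat.le_sub_one_of_lt hi)
    (by simpa using Nat.sub_one_lt_of_lt hi)
  rw [partOfBeta, List.getD_eq_getElem _ _ (by simpa using hi)]
  omega

theorem isPartition_partOfBeta (hC : C.Nodup) : IsPartition (partOfBeta C) := by
  refine ⟨fun i j hij => ?_, card C, fun i hi => partOfBeta_eq_zero hi⟩
  by_cases hj : j < card C
  · have := partOfBeta_add_eq_getElem hC hj
    have := partOfBeta_add_eq_getElem hC (hij.trans_lt hj)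
    have := (pairwise_gt_reverse_sort hC).getElem_add_sub_le hij (by simpa using hj)
    omega
  · rw [partOfBeta_eq_zero (not_lt.mp hj)]
    exact Nat.zero_le _

theorem betaSet_partOfBeta (hC : C.Nodup) : betaSet (partOfBeta C) (card C) = C := by
  have hlist : (List.range (card C)).map (fun i => partOfBeta C i + (card C - 1 - i))
      = (C.sort (· ≤ ·)).reverse :=
    List.ext_getElem (by simp) fun i h _ => by
      simpa using partOfBeta_add_eq_getElem hC (by simpa using h)
  rw [betaSet, Multiset.range, map_coe, hlist, coe_reverse, sort_eq]

theorem partOfBeta_betaSet {f : ℕ → ℕ} (hf : IsPartition f) {r : ℕ} (hr : conj f 0 ≤ r) :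
    partOfBeta (betaSet f r) = f := by
  have hsort : (betaSet f r).sort (· ≤ ·)
      = ((List.range r).map fun i => f i + (r - 1 - i)).reverse := by
    refine List.Perm.eq_of_pairwise' (r := (· ≤ ·)) (pairwise_sort _ _) ?_ ?_
    · rw [List.pairwise_reverse]
      refine List.pairwise_iff_getElem.mpr fun a b ha hb hab => ?_
      simp only [List.getElem_map, List.getElem_range]
      exact (betaSet_strictAnti hf hab (by simpa using hb)).le
    · rw [← coe_eq_coe, sort_eq, coe_reverse, betaSet, Multiset.range, map_coe]
  funext i
  rw [partOfBeta, hsort, List.reverse_reverse, card_betaSet]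
  by_cases hi : i < r
  · rw [List.getD_eq_getElem _ _ (by simpa using hi)]
    simp only [List.getElem_map, List.getElem_range]
    omega
  · rw [List.getD_eq_default _ _ (by simpa using hi), (conj_zero_le_iff hf i).mp (by omega),
    Nat.zero_sub]

theorem exists_betaSet_eq (hC : C.Nodup) {r s : ℕ} (hcard : card C = r)
    (hCN : ∀ x ∈ C, x < r + s) :
    ∃ g, IsPartition g ∧ conj g 0 ≤ r ∧ g 0 ≤ s ∧ betaSet g r = C := by
  have hg := isPartition_partOfBeta hC
  refine ⟨partOfBeta C, hg, (conj_zero_le_iff hg r).mpr (partOfBeta_eq_zero hcard.le), ?_,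
    hcard ▸ betaSet_partOfBeta hC⟩
  rcases Nat.eq_zero_or_pos (card C) with h0 | hpos
  · simp [partOfBeta_eq_zero h0.le]
  · have hmem : (C.sort (· ≤ ·)).reverse[0]'(by simpa using hpos) ∈ C := by
      rw [← mem_sort (· ≤ ·), ← List.mem_reverse]
      exact List.getElem_mem _
    have := partOfBeta_add_eq_getElem hC hpos
    have := hCN _ hmem
    omega

end PartOfBeta

section RimList

variable {L : List (ℕ × ℕ)}

theorem pairwise_of_pairwise_flatMap (h : (L.flatMap fun p => [p.1, p.2]).Pairwise (· > ·)) :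
    (∀ p ∈ L, p.2 < p.1) ∧ L.Pairwise (fun p q => q.1 < p.2) := by
  induction L with
  | nil => simp
  | cons p t ih =>
    simp only [List.flatMap_cons, List.cons_append, List.nil_append, List.pairwise_cons,
      List.mem_cons, List.mem_flatMap] at h
    obtain ⟨h1, h2, h3⟩ := h
    obtain ⟨ih1, ih2⟩ := ih h3
    refine ⟨?_, List.Pairwise.cons (fun q hq => h2 q.1 ⟨q, hq, by simp⟩) ih2⟩
    simpa [h1 p.2 (Or.inl rfl)] using ih1

theorem nodup_map_fst_of_pairwise_flatMap
    (h : (L.flatMap fun p => [p.1, p.2]).Pairwise (· > ·)) : (L.map Prod.fst).Nodup := by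
  obtain ⟨hlt, hpw⟩ := pairwise_of_pairwise_flatMap h
  refine List.pairwise_map.mpr (hpw.imp_of_mem fun ha hb hab => ?_)
  have := hlt _ ha
  omega

theorem nodup_map_snd_of_pairwise_flatMap
    (h : (L.flatMap fun p => [p.1, p.2]).Pairwise (· > ·)) : (L.map Prod.snd).Nodup := by
  obtain ⟨hlt, hpw⟩ := pairwise_of_pairwise_flatMap h
  refine List.pairwise_map.mpr (hpw.imp_of_mem fun ha hb hab => ?_)
  have := hlt _ hb
  omega

end RimList

section RimDown

variable {B : Multiset ℕ} {L : List (ℕ × ℕ)}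

theorem mem_rimDown (hB : B.Nodup) {x : ℕ} :
    x ∈ rimDown B L ↔ (x ∈ B ∧ x ∉ L.map Prod.fst) ∨ x ∈ L.map Prod.snd := by
  rw [rimDown, mem_add, mem_sub_of_nodup hB, mem_coe, mem_coe]

theorem nodup_rimDown (hB : B.Nodup) (hsn : (L.map Prod.snd).Nodup) (hsB : ∀ p ∈ L, p.2 ∉ B) :
    (rimDown B L).Nodup := by
  refine nodup_add.mpr ⟨nodup_of_le (Multiset.sub_le_self _ _) hB, coe_nodup.mpr hsn,
    disjoint_left.mpr fun hx hxS => ?_⟩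
  obtain ⟨p, hp, rfl⟩ := List.mem_map.mp (mem_coe.mp hxS)
  exact hsB p hp (mem_of_le (Multiset.sub_le_self _ _) hx)

theorem card_rimDown (hfn : (L.map Prod.fst).Nodup) (hfB : ∀ p ∈ L, p.1 ∈ B) :
    card (rimDown B L) = card B := by
  have hle : (L.map Prod.fst : Multiset ℕ) ≤ B :=
    (le_iff_subset (coe_nodup.mpr hfn)).mpr fun x hx => by
      obtain ⟨p, hp, rfl⟩ := List.mem_map.mp (mem_coe.mp hx)
      exact hfB p hp
  have := card_le_card hle
  simp only [coe_card, List.length_map] at this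
  rw [rimDown, card_add, card_sub hle]
  simp only [coe_card, List.length_map]
  omega

theorem lt_of_mem_rimDown {n : ℕ} (hBn : ∀ x ∈ B, x < n) (hlt : ∀ p ∈ L, p.2 < p.1)
    (hfB : ∀ p ∈ L, p.1 ∈ B) {x : ℕ} (hx : x ∈ rimDown B L) : x < n := by
  rcases mem_add.mp hx with hx | hx
  · exact hBn x (mem_of_le (Multiset.sub_le_self _ _) hx)
  · obtain ⟨p, hp, rfl⟩ := List.mem_map.mp (mem_coe.mp hx)
    exact (hlt p hp).trans (hBn _ (hfB p hp))

end RimDown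

theorem sub_mem_map_sub {l : List ℕ} {N y : ℕ} (hl : ∀ a ∈ l, a ≤ N) (hy : y ≤ N) :
    N - y ∈ l.map (N - ·) ↔ y ∈ l := by
  refine ⟨fun h => ?_, fun h => List.mem_map_of_mem h⟩
  obtain ⟨a, ha, hay⟩ := List.mem_map.mp h
  have := hl a ha
  rwa [show y = a by omega]

section RotRim

/-- The rim pairs `L` of an abacus `B`, transported to `rotCompl N B`. -/
def rotRim (N : ℕ) (L : List (ℕ × ℕ)) : List (ℕ × ℕ) := (L.map fun p => (N - p.2, N - p.1)).reverse

variable {N : ℕ} {L : List (ℕ × ℕ)}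

@[simp]
theorem length_rotRim : (rotRim N L).length = L.length := by simp [rotRim]

theorem getElem!_rotRim {i : ℕ} (hi : i < L.length) :
    (rotRim N L)[i]! = (N - L[L.length - 1 - i]!.2, N - L[L.length - 1 - i]!.1) := by
  rw [getElem!_pos _ _ (by simpa using hi), getElem!_pos _ _ (by omega)]
  simp [rotRim, List.getElem_reverse]

theorem headI_rotRim (h : L ≠ []) :
    (rotRim N L).headI = (N - L.getLast!.2, N - L.getLast!.1) := by
  obtain ⟨t, a, rfl⟩ := List.eq_nil_or_concat L |>.resolve_left h
  simp [rotRim]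

theorem getLast!_rotRim (h : L ≠ []) :
    (rotRim N L).getLast! = (N - L.headI.2, N - L.headI.1) := by
  obtain ⟨a, t, rfl⟩ := List.exists_cons_of_ne_nil h
  simp [rotRim]

theorem map_fst_rotRim : (rotRim N L).map Prod.fst = ((L.map Prod.snd).map (N - ·)).reverse := by
  simp [rotRim]

theorem map_snd_rotRim : (rotRim N L).map Prod.snd = ((L.map Prod.fst).map (N - ·)).reverse := by
  simp [rotRim]

theorem flatMap_rotRim :
    ((rotRim N L).flatMap fun q => [q.1, q.2])
      = ((L.flatMap fun p => [p.1, p.2]).map (N - ·)).reverse := by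
  induction L with
  | nil => simp [rotRim]
  | cons p t ih =>
    have : rotRim N (p :: t) = rotRim N t ++ [(N - p.2, N - p.1)] := by simp [rotRim]
    simp [this, List.flatMap_append, ih]

theorem rimLen_rotRim (hle : ∀ p ∈ L, p.1 ≤ N) : rimLen (rotRim N L) = rimLen L := by
  rw [rimLen, rimLen, rotRim, List.map_reverse, List.sum_reverse, List.map_map]
  congr 1
  refine List.map_congr_left fun p hp => ?_
  have := hle p hp
  simp only [Function.comp_apply]
  omega

theorem pairwise_flatMap_rotRim (hflat : (L.flatMap fun p => [p.1, p.2]).Pairwise (· > ·))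
    (hfN : ∀ p ∈ L, p.1 ≤ N) : ((rotRim N L).flatMap fun q => [q.1, q.2]).Pairwise (· > ·) := by
  have hlt := (pairwise_of_pairwise_flatMap hflat).1
  have hle : ∀ x ∈ L.flatMap (fun p => [p.1, p.2]), x ≤ N := by
    simp only [List.mem_flatMap, List.mem_cons, List.not_mem_nil, or_false]
    rintro x ⟨p, hp, rfl | rfl⟩
    exacts [hfN p hp, (hlt p hp).le.trans (hfN p hp)]
  rw [flatMap_rotRim, List.pairwise_reverse, List.pairwise_map]
  refine hflat.imp_of_mem fun ha hb hab => ?_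
  have := hle _ ha
  have := hle _ hb
  omega

variable {B : Multiset ℕ}

theorem rotRim_pairs (hfN : ∀ p ∈ L, p.1 ≤ N) (hsN : ∀ p ∈ L, p.2 ≤ N)
    (hpairs : ∀ p ∈ L, p.1 ∈ B ∧ p.2 ∉ B) :
    ∀ q ∈ rotRim N L, q.1 ∈ rotCompl N B ∧ q.2 ∉ rotCompl N B := by
  intro q hq
  obtain ⟨p, hp, rfl⟩ := List.mem_map.mp (List.mem_reverse.mp hq)
  exact ⟨(sub_mem_rotCompl (hsN p hp)).mpr (hpairs p hp).2,
    fun h => (sub_mem_rotCompl (hfN p hp)).mp h (hpairs p hp).1⟩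

theorem rimDown_rotRim (hB : B.Nodup) (hBN : ∀ x ∈ B, x ≤ N)
    (hflat : (L.flatMap fun p => [p.1, p.2]).Pairwise (· > ·))
    (hpairs : ∀ p ∈ L, p.1 ∈ B ∧ p.2 ∉ B) :
    rimDown (rotCompl N B) (rotRim N L) = rotCompl N (rimDown B L) := by
  have hfN : ∀ p ∈ L, p.1 ≤ N := fun p hp => hBN _ (hpairs p hp).1
  have hsN : ∀ p ∈ L, p.2 ≤ N := fun p hp =>
    ((pairwise_of_pairwise_flatMap hflat).1 p hp).le.trans (hfN p hp)
  have hfN' : ∀ a ∈ L.map Prod.fst, a ≤ N := List.forall_mem_map.mpr hfN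
  have hsN' : ∀ a ∈ L.map Prod.snd, a ≤ N := List.forall_mem_map.mpr hsN
  have hF : ∀ a ∈ L.map Prod.fst, a ∈ B := List.forall_mem_map.mpr fun p hp => (hpairs p hp).1
  have hS : ∀ a ∈ L.map Prod.snd, a ∉ B := List.forall_mem_map.mpr fun p hp => (hpairs p hp).2
  have hsnd : ((rotRim N L).map Prod.snd).Nodup := by
    rw [map_snd_rotRim, List.nodup_reverse]
    refine (nodup_map_fst_of_pairwise_flatMap hflat).map_on fun a ha b hb hab => ?_
    have := hfN' a ha
    have := hfN' b hb
    omega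
  refine (Nodup.ext (nodup_rimDown nodup_rotCompl hsnd fun q hq =>
    (rotRim_pairs hfN hsN hpairs q hq).2) nodup_rotCompl).mpr fun x => ?_
  rw [mem_rimDown nodup_rotCompl, map_fst_rotRim, map_snd_rotRim, List.mem_reverse,
    List.mem_reverse]
  rcases le_or_gt x N with hxN | hxN
  · obtain ⟨y, hy, rfl⟩ : ∃ y ≤ N, x = N - y := ⟨N - x, by omega, by omega⟩
    rw [sub_mem_rotCompl hy, sub_mem_rotCompl hy, sub_mem_map_sub hsN' hy,
      sub_mem_map_sub hfN' hy, mem_rimDown hB]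
    have := hF y
    have := hS y
    tauto
  · have hx : ¬ x ≤ N := by omega
    have hxS : x ∉ (L.map Prod.fst).map (N - ·) := fun h => by
      obtain ⟨_, -, rfl⟩ := List.mem_map.mp h
      omega
    simp only [mem_rotCompl, hxS, hx, false_and, or_false]

end RotRim

section FirstGap

variable {B : Multiset ℕ}

theorem firstGap_notMem (B : Multiset ℕ) : firstGap B ∉ B :=
  Nat.sInf_mem (Infinite.exists_notMem_finset B.toFinset |>.imp fun _ h => mt mem_toFinset.mpr h)

theorem firstGap_le_of_notMem {p : ℕ} (h : p ∉ B) : firstGap B ≤ p := Nat.sInf_le h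

theorem bddAbove_mem (B : Multiset ℕ) : BddAbove {p : ℕ | p ∈ B} :=
  (B.toFinset.finite_toSet.subset fun _ h => by simpa using h).bddAbove

theorem lastBead_mem (hB : B ≠ 0) : lastBead B ∈ B :=
  Nat.sSup_mem (exists_mem_of_ne_zero hB) (bddAbove_mem B)

theorem le_lastBead {x : ℕ} (hx : x ∈ B) : x ≤ lastBead B := le_csSup (bddAbove_mem B) hx

theorem firstGap_rotCompl {N : ℕ} (hB : B ≠ 0) (hBN : ∀ x ∈ B, x ≤ N) :
    firstGap (rotCompl N B) = N - lastBead B := by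
  have hlast := hBN _ (lastBead_mem hB)
  refine le_antisymm (firstGap_le_of_notMem fun h => ?_) (not_lt.mp fun h => ?_)
  · exact (sub_mem_rotCompl hlast).mp h (lastBead_mem hB)
  · refine firstGap_notMem (rotCompl N B) (mem_rotCompl.mpr ⟨by omega, fun hmem => ?_⟩)
    have := le_lastBead hmem
    omega

end FirstGap

section Transport

variable {e N : ℕ} {B : Multiset ℕ}

theorem runner_rotCompl {f g : ℕ} (hfN : f ≤ N) (hgf : g < f) (hmod : f % e = g % e)
    (hrun : ∀ j, 1 ≤ j → g + j * e < f → g + j * e ∉ B) :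
    ∀ j, 1 ≤ j → N - f + j * e < N - g → N - f + j * e ∈ rotCompl N B := by
  intro j hj hlt
  obtain ⟨t, ht⟩ := (Nat.modEq_iff_dvd' hgf.le).mp hmod.symm
  rw [mul_comm] at ht
  have hjt : j < t := Nat.lt_of_mul_lt_mul_right (a := e) (by omega)
  have hje := Nat.mul_le_mul_right e hjt.le
  have he := Nat.mul_le_mul_right e hj
  have he0 : e ≠ 0 := fun h => by simp [h] at ht; omega
  -- with `f = g + t * e`, the position `N - f + j * e` reflects to `g + (t - j) * e`
  have hsub : N - (N - f + j * e) = g + (t - j) * e := by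
    rw [Nat.sub_mul]
    omega
  rw [mem_rotCompl, hsub]
  refine ⟨by omega, hrun (t - j) (by omega) ?_⟩
  rw [Nat.sub_mul]
  omega

theorem gap_rotCompl {a b : ℕ} (hbN : b ≤ N) (hfull : ∀ p, a < p → p < b → p ∈ B) :
    ∀ p, N - b < p → p < N - a → p ∉ rotCompl N B := fun p hp hp' hmem =>
  (mem_rotCompl.mp hmem).2 (hfull (N - p) (by omega) (by omega))

theorem RimSeq'.rimSeq_rotRim {L : List (ℕ × ℕ)}
    (hBN : ∀ x ∈ B, x ≤ N) (hL : RimSeq' e B L) : RimSeq e (rotCompl N B) (rotRim N L) := by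
  obtain ⟨hne, hchain, hpairs, hlast, hint, hhead⟩ := hL
  have hflat := List.isChain_iff_pairwise.mp hchain
  have hlt := (pairwise_of_pairwise_flatMap hflat).1
  have hfN : ∀ p ∈ L, p.1 ≤ N := fun p hp => hBN _ (hpairs p hp).1
  have hsN : ∀ p ∈ L, p.2 ≤ N := fun p hp => (hlt p hp).le.trans (hfN p hp)
  have hBne : B ≠ 0 := by
    rintro rfl
    exact notMem_zero _ (hpairs _ (List.headI_mem_of_ne_nil hne)).1
  refine ⟨by simpa [rotRim] using hne,
    List.isChain_iff_pairwise.mpr (pairwise_flatMap_rotRim hflat hfN),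
    rotRim_pairs hfN hsN hpairs, ?_, ?_, ?_⟩
  · have hmem := List.getLast!_mem_of_ne_nil hne
    have hgN : firstGap B ≤ N := hlast ▸ hsN _ hmem
    rw [headI_rotRim hne, hlast]
    refine ⟨(sub_mem_rotCompl hgN).mpr (firstGap_notMem B), fun x hx => ?_⟩
    have := firstGap_le_of_notMem (mem_rotCompl.mp hx).2
    have := (mem_rotCompl.mp hx).1
    omega
  · intro i hi
    rw [length_rotRim] at hi
    obtain ⟨hmod, hrun, hgap⟩ := hint (L.length - 1 - i) (by omega) (by omega)
    have hmem := List.getElem!_mem_of_lt (show L.length - 1 - i < L.length by omega)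
    have hmem' := List.getElem!_mem_of_lt (show L.length - 1 - i - 1 < L.length by omega)
    rw [getElem!_rotRim (by omega), getElem!_rotRim (by omega),
      show L.length - 1 - (i + 1) = L.length - 1 - i - 1 by omega]
    exact ⟨Nat.sub_mod_eq_of_mod_eq (hsN _ hmem) (hfN _ hmem) hmod.symm,
      runner_rotCompl (hfN _ hmem) (hlt _ hmem) hmod hrun, gap_rotCompl (hsN _ hmem') hgap⟩
  · have hmem := List.headI_mem_of_ne_nil hne
    rw [getLast!_rotRim hne]
    rcases hhead with ⟨hmod, hrun, hfill⟩ | ⟨hrun, hfirst⟩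
    · refine Or.inl ⟨Nat.sub_mod_eq_of_mod_eq (hsN _ hmem) (hfN _ hmem) hmod.symm,
        runner_rotCompl (hfN _ hmem) (hlt _ hmem) hmod hrun, fun p hp hp' hpmem => ?_⟩
      rw [firstGap_rotCompl hBne hBN] at hp
      have := hBN _ (lastBead_mem hBne)
      exact (mem_rotCompl.mp hpmem).2 (hfill (N - p) (by omega) (by omega))
    · refine Or.inr ⟨fun j hj (hje : j * e ≤ N - L.headI.2) => ?_,
        by rw [firstGap_rotCompl hBne hBN, hfirst]⟩
      have := hsN _ hmem
      rw [Nat.sub_sub]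
      exact (sub_mem_rotCompl (by omega)).mpr (hrun j hj)

end Transport

section Uniqueness

variable {e : ℕ} {B : Multiset ℕ}

theorem mem_of_full_above {b c d : ℕ} (hfull : ∀ j, 1 ≤ j → c + j * e < b → c + j * e ∈ B)
    (hmod : d % e = c % e) (hcd : c < d) (hdb : d < b) : d ∈ B := by
  obtain ⟨t, ht⟩ := (Nat.modEq_iff_dvd' hcd.le).mp hmod.symm
  rw [mul_comm] at ht
  have ht1 : 1 ≤ t := Nat.pos_of_ne_zero fun h => by simp [h] at ht; omega
  rw [show d = c + t * e by omega]
  exact hfull t ht1 (by omega)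

theorem mem_of_full_below {b c : ℕ} (hfull : ∀ j, 1 ≤ j → j * e ≤ b → b - j * e ∈ B)
    (hmod : b % e = c % e) (hcb : c < b) : c ∈ B := by
  obtain ⟨t, ht⟩ := (Nat.modEq_iff_dvd' hcb.le).mp hmod.symm
  rw [mul_comm] at ht
  have ht1 : 1 ≤ t := Nat.pos_of_ne_zero fun h => by simp [h] at ht; omega
  rw [show c = b - t * e by omega]
  exact hfull t ht1 (by omega)

theorem eq_of_full_above {b c₁ c₂ : ℕ} (hmod₁ : b % e = c₁ % e) (hc₁ : c₁ ∉ B) (hlt₁ : c₁ < b)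
    (hfull₁ : ∀ j, 1 ≤ j → c₁ + j * e < b → c₁ + j * e ∈ B) (hmod₂ : b % e = c₂ % e)
    (hc₂ : c₂ ∉ B) (hlt₂ : c₂ < b) (hfull₂ : ∀ j, 1 ≤ j → c₂ + j * e < b → c₂ + j * e ∈ B) :
    c₁ = c₂ := by
  rcases lt_trichotomy c₁ c₂ with h | h | h
  · exact absurd (mem_of_full_above hfull₁ (hmod₂.symm.trans hmod₁) h hlt₂) hc₂
  · exact h
  · exact absurd (mem_of_full_above hfull₂ (hmod₁.symm.trans hmod₂) h hlt₁) hc₁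

/-- A recursive form of `RimSeq` without its condition on the first bead `b`. -/
inductive IsRimFrom (e : ℕ) (B : Multiset ℕ) : ℕ → List (ℕ × ℕ) → Prop
  | lastRunner (b c : ℕ) : b ∈ B → c ∉ B → c < b → b % e = c % e →
      (∀ j, 1 ≤ j → c + j * e < b → c + j * e ∈ B) →
      (∀ p, firstGap B ≤ p → p < c → p ∉ B) → IsRimFrom e B b [(b, c)]
  | lastFirstGap (b c : ℕ) : b ∈ B → c ∉ B → c < b →
      (∀ j, 1 ≤ j → j * e ≤ b → b - j * e ∈ B) → c = firstGap B → IsRimFrom e B b [(b, c)]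
  | cons (b c b' : ℕ) (t : List (ℕ × ℕ)) : b ∈ B → c ∉ B → c < b → b' < c → b % e = c % e →
      (∀ j, 1 ≤ j → c + j * e < b → c + j * e ∈ B) → (∀ p, b' < p → p < c → p ∉ B) →
      IsRimFrom e B b' t → IsRimFrom e B b ((b, c) :: t)

theorem IsRimFrom.mem {b : ℕ} {L : List (ℕ × ℕ)} (h : IsRimFrom e B b L) : b ∈ B := by
  cases h <;> assumption

theorem IsRimFrom.firstGap_lt {b : ℕ} {L : List (ℕ × ℕ)} (h : IsRimFrom e B b L) :
    firstGap B < b := by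
  cases h with
  | lastRunner _ c _ hc hcb => exact (firstGap_le_of_notMem hc).trans_lt hcb
  | lastFirstGap _ c _ hc hcb => exact (firstGap_le_of_notMem hc).trans_lt hcb
  | cons _ c _ _ _ hc hcb => exact (firstGap_le_of_notMem hc).trans_lt hcb

theorem IsRimFrom.eq {b : ℕ} {L₁ L₂ : List (ℕ × ℕ)} (h₁ : IsRimFrom e B b L₁)
    (h₂ : IsRimFrom e B b L₂) : L₁ = L₂ := by
  induction h₁ generalizing L₂ with
  | lastRunner b c₁ _ hc₁ hlt₁ hm₁ hr₁ hg₁ =>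
    cases h₂ with
    | lastRunner _ c₂ _ hc₂ hlt₂ hm₂ hr₂ =>
      rw [eq_of_full_above hm₁ hc₁ hlt₁ hr₁ hm₂ hc₂ hlt₂ hr₂]
    | lastFirstGap _ c₂ _ _ _ hfull => exact absurd (mem_of_full_below hfull hm₁ hlt₁) hc₁
    | cons _ c₂ b' t _ hc₂ hlt₂ hb' hm₂ hr₂ _ ht =>
      obtain rfl := eq_of_full_above hm₁ hc₁ hlt₁ hr₁ hm₂ hc₂ hlt₂ hr₂
      exact absurd ht.mem (hg₁ b' ht.firstGap_lt.le hb')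
  | lastFirstGap b c₁ _ hc₁ hlt₁ hfull hfg₁ =>
    cases h₂ with
    | lastRunner _ c₂ _ hc₂ hlt₂ hm₂ => exact absurd (mem_of_full_below hfull hm₂ hlt₂) hc₂
    | lastFirstGap _ c₂ _ _ _ _ hfg₂ => rw [hfg₁, hfg₂]
    | cons _ c₂ _ _ _ hc₂ hlt₂ _ hm₂ => exact absurd (mem_of_full_below hfull hm₂ hlt₂) hc₂
  | cons b c₁ b₁ t₁ _ hc₁ hlt₁ hb₁ hm₁ hr₁ hg₁ ht₁ ih =>
    cases h₂ with
    | lastRunner _ c₂ _ hc₂ hlt₂ hm₂ hr₂ hg₂ =>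
      obtain rfl := eq_of_full_above hm₁ hc₁ hlt₁ hr₁ hm₂ hc₂ hlt₂ hr₂
      exact absurd ht₁.mem (hg₂ b₁ ht₁.firstGap_lt.le hb₁)
    | lastFirstGap _ c₂ _ _ _ hfull => exact absurd (mem_of_full_below hfull hm₁ hlt₁) hc₁
    | cons _ c₂ b₂ t₂ _ hc₂ hlt₂ hb₂ hm₂ hr₂ hg₂ ht₂ =>
      obtain rfl := eq_of_full_above hm₁ hc₁ hlt₁ hr₁ hm₂ hc₂ hlt₂ hr₂
      obtain rfl : b₁ = b₂ := by
        rcases lt_trichotomy b₁ b₂ with h | h | h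
        · exact absurd ht₂.mem (hg₁ b₂ h hb₂)
        · exact h
        · exact absurd ht₁.mem (hg₂ b₁ h hb₁)
      rw [ih ht₂]

theorem isRimFrom_of_conditions :
    ∀ L : List (ℕ × ℕ), L ≠ [] →
      (L.flatMap fun p => [p.1, p.2]).Pairwise (· > ·) →
      (∀ p ∈ L, p.1 ∈ B ∧ p.2 ∉ B) →
      (∀ i : ℕ, i + 1 < L.length →
        L[i]!.1 % e = L[i]!.2 % e ∧
        (∀ j : ℕ, 1 ≤ j → L[i]!.2 + j * e < L[i]!.1 → L[i]!.2 + j * e ∈ B) ∧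
        (∀ p : ℕ, L[i + 1]!.1 < p → p < L[i]!.2 → p ∉ B)) →
      ((L.getLast!.1 % e = L.getLast!.2 % e ∧
          (∀ j : ℕ, 1 ≤ j → L.getLast!.2 + j * e < L.getLast!.1 → L.getLast!.2 + j * e ∈ B) ∧
          (∀ p : ℕ, firstGap B ≤ p → p < L.getLast!.2 → p ∉ B)) ∨
        ((∀ j : ℕ, 1 ≤ j → j * e ≤ L.getLast!.1 → L.getLast!.1 - j * e ∈ B) ∧
          L.getLast!.2 = firstGap B)) →
      IsRimFrom e B L.headI.1 L
  | [], hne, _, _, _, _ => absurd rfl hne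
  | [p], _, hflat, hpairs, _, hlast => by
    have hlt := (pairwise_of_pairwise_flatMap hflat).1 p (by simp)
    rw [show [p].getLast! = p by simp] at hlast
    rcases hlast with ⟨hmod, hrun, hgap⟩ | ⟨hfull, hfirst⟩
    · exact .lastRunner p.1 p.2 (hpairs p (by simp)).1 (hpairs p (by simp)).2 hlt hmod hrun hgap
    · exact .lastFirstGap p.1 p.2 (hpairs p (by simp)).1 (hpairs p (by simp)).2 hlt hfull hfirst
  | p :: q :: t, _, hflat, hpairs, hint, hlast => by
    obtain ⟨hlt, hcross⟩ := pairwise_of_pairwise_flatMap hflat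
    have htail := isRimFrom_of_conditions (q :: t) (List.cons_ne_nil q t)
      (List.pairwise_append.mp (by rwa [List.flatMap_cons] at hflat)).2.1
      (fun x hx => hpairs x (List.mem_cons_of_mem p hx))
      (fun i hi => by simpa using hint (i + 1) (by simpa using hi))
      (by simpa using hlast)
    obtain ⟨hmod, hrun, hgap⟩ := by simpa using hint 0 (by simp)
    exact .cons p.1 p.2 q.1 (q :: t) (hpairs p (by simp)).1 (hpairs p (by simp)).2
      (hlt p (by simp)) ((List.pairwise_cons.mp hcross).1 q (by simp)) hmod hrun hgap htail

theorem RimSeq.eq {L M : List (ℕ × ℕ)} (hL : RimSeq e B L) (hM : RimSeq e B M) : L = M := by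
  obtain ⟨hL1, hL2, hL3, hL4, hL5, hL6⟩ := hL
  obtain ⟨hM1, hM2, hM3, hM4, hM5, hM6⟩ := hM
  have hhead : L.headI.1 = M.headI.1 := le_antisymm (hM4.2 _ hL4.1) (hL4.2 _ hM4.1)
  have hL' := isRimFrom_of_conditions L hL1 (List.isChain_iff_pairwise.mp hL2) hL3 hL5 hL6
  have hM' := isRimFrom_of_conditions M hM1 (List.isChain_iff_pairwise.mp hM2) hM3 hM5 hM6
  exact hL'.eq (hhead ▸ hM')

end Uniqueness

theorem stmt19_general (e : ℕ) (f : ℕ → ℕ) (hf : IsPartition f)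
    (r s : ℕ) (hr : conj f 0 ≤ r) (hs : f 0 ≤ s)
    (L M : List (ℕ × ℕ))
    (hL : RimSeq' e (betaSet f r) L) (hM : RimSeq e (betaSet (conj f) s) M) :
    rimLen L = rimLen M ∧
    partOfBeta (rimDown (betaSet f r) L)
      = conj (partOfBeta (rimDown (betaSet (conj f) s) M)) := by
  have ⟨hne, hchain, hpairs, _⟩ := hL
  have hflat := List.isChain_iff_pairwise.mp hchain
  have hfB : ∀ p ∈ L, p.1 ∈ betaSet f r := fun p hp => (hpairs p hp).1
  have hBn : ∀ x ∈ betaSet f r, x < r + s := fun x hx =>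
    (lt_of_mem_betaSet hf hx).trans_le (by omega)
  have hBN : ∀ x ∈ betaSet f r, x ≤ r + s - 1 := fun x hx => Nat.le_sub_one_of_lt (hBn x hx)
  have hrs : 0 < r + s := (Nat.zero_le _).trans_lt (hBn _ (hfB _ (List.headI_mem_of_ne_nil hne)))
  have hconj := betaSet_conj hf hr hs hrs
  obtain rfl : M = rotRim (r + s - 1) L := (hconj ▸ hM).eq (hL.rimSeq_rotRim hBN)
  refine ⟨(rimLen_rotRim fun p hp => hBN _ (hfB p hp)).symm, ?_⟩
  obtain ⟨g, hg, hgr, hgs, hD⟩ := exists_betaSet_eq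
    (nodup_rimDown (nodup_betaSet hf r) (nodup_map_snd_of_pairwise_flatMap hflat)
      fun p hp => (hpairs p hp).2)
    ((card_rimDown (nodup_map_fst_of_pairwise_flatMap hflat) hfB).trans (card_betaSet f r))
    fun x hx => lt_of_mem_rimDown hBn (pairwise_of_pairwise_flatMap hflat).1 hfB hx
  rw [hconj, rimDown_rotRim (nodup_betaSet hf r) hBN hflat hpairs, ← hD,
    ← betaSet_conj hg hgr hgs hrs, partOfBeta_betaSet hg hgr,
    partOfBeta_betaSet (isPartition_conj hg) (by rwa [conj_conj hg]), conj_conj hg]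

/-- for an e-restricted partition ν ≠ ∅, the conjugate rim construction
satisfies rim'(ν) = rim(ν') and ν^▽ = ((ν')^△)'.  Here L is the conjugate rim sequence
on the r-bead display of ν, and M the rim sequence on the s-bead display of ν'. -/
theorem stmt19 (e : ℕ) (he : 2 ≤ e) (f : ℕ → ℕ) (hf : IsPartition f)
    (hres : ERestricted e f) (hne : f 0 ≠ 0)
    (r s : ℕ) (hr : conj f 0 ≤ r) (hs : f 0 ≤ s)
    (L M : List (ℕ × ℕ))
    (hL : RimSeq' e (betaSet f r) L) (hM : RimSeq e (betaSet (conj f) s) M) :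
    rimLen L = rimLen M ∧
    partOfBeta (rimDown (betaSet f r) L)
      = conj (partOfBeta (rimDown (betaSet (conj f) s) M)) :=
  stmt19_general e f hf r s hr hs L M hL hM
end
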